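/- arXiv:2510.18761 — 4 statements merged into one kernel-verified Lean document; each statement's English description precedes it below -/
import Mathlib

section
/- Let p, p', q be partially ordered patterns (POPs). If p and p' are shape-Wilf-equivalent, then the ordinal sums p⊕q and p'⊕q are shape-Wilf-equivalent. -/
/-!
Call a cell of the board blue for `σ` if `σ` has an occurrence of `q`, inside the board,
strictly north-east of it. For nonempty `p`, `σ` contains `p ⊕ q` exactly when it contains `p`
in blue cells: the top-right cell of such an occurrence of `p` sees a copy of `q`.

Every blue cell is witnessed by a copy of `q` made of non-blue `1`s, so moving the blue `1`s of
`σ` to other blue cells does not change the blue cells. The transversals thus fall into classes,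
and the class of `σ₀` is in bijection with the transversals of the Ferrers board cut out by the
blue cells of `σ₀` on its blue rows and columns, containment of `p ⊕ q` matching containment of
`p`. Applying `p ∼ₛ p'` to these boards, each class has as many `p ⊕ q`-avoiders as
`p' ⊕ q`-avoiders. The empty board shows that `p` and `p'` are empty together, and for empty
`p` there is nothing to prove.
-/


/-- A partially ordered pattern (POP) of size `k`: a strict partial order on the
labels `{1, …, k}`, given by the relation `lt a b` meaning "`a` is strictly below `b`". -/
structure POP (k : ℕ) where
  lt : ℕ → ℕ → Prop
  supp : ∀ a b, lt a b → 1 ≤ a ∧ a ≤ k ∧ 1 ≤ b ∧ b ≤ k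
  irrefl : ∀ a, ¬ lt a a
  trans : ∀ a b c, lt a b → lt b c → lt a c

/-- An occurrence of the POP `p` in a permutation `π` of `{1, …, n}`:
indices `i₁ < ⋯ < i_k` with `π (i_a) < π (i_b)` whenever label `a` is strictly
below label `b` in `p` (everything 0-indexed internally). -/
def POP.Occurs {k : ℕ} (p : POP k) {n : ℕ} (π : Equiv.Perm (Fin n)) : Prop :=
  ∃ f : Fin k → Fin n, StrictMono f ∧
    ∀ a b : Fin k, p.lt ((a : ℕ) + 1) ((b : ℕ) + 1) → π (f a) < π (f b)

/-- The number of permutations of `{1, …, n}` avoiding the POP `p`. -/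
noncomputable def POP.avoiders {k : ℕ} (p : POP k) (n : ℕ) : ℕ :=
  Nat.card {π : Equiv.Perm (Fin n) // ¬ p.Occurs π}

/-- Wilf-equivalence of POPs: the same number of avoiding permutations for every `n ≥ 1`. -/
def WilfEquiv {k l : ℕ} (p : POP k) (q : POP l) : Prop :=
  ∀ n : ℕ, 1 ≤ n → p.avoiders n = q.avoiders n

/-- `σ` is a transversal of the Ferrers board with row lengths `lam`
(rows and columns 0-indexed): the 1 of column `j` lies in cell (row `σ j`, column `j`),
which must lie inside the board. -/
def IsTransversal {n : ℕ} (lam : Fin n → ℕ) (σ : Equiv.Perm (Fin n)) : Prop :=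
  ∀ j : Fin n, (j : ℕ) < lam (σ j)

/-- The transversal `σ` of the Ferrers board `lam` contains the POP `p`:
there are rows `r₁ < ⋯ < r_k`, columns `c₁ < ⋯ < c_k`, all cells `(r i, c j)` inside
the board, and a bijection `τ` with `σ (c j) = r (τ j)` and `τ a < τ b` whenever
`a` is strictly below `b` in `p`. -/
def POP.TContains {k : ℕ} (p : POP k) {n : ℕ} (lam : Fin n → ℕ)
    (σ : Equiv.Perm (Fin n)) : Prop :=
  ∃ (r c : Fin k → Fin n) (τ : Equiv.Perm (Fin k)),
    StrictMono r ∧ StrictMono c ∧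
    (∀ i j, (c j : ℕ) < lam (r i)) ∧
    (∀ j, σ (c j) = r (τ j)) ∧
    ∀ a b : Fin k, p.lt ((a : ℕ) + 1) ((b : ℕ) + 1) → τ a < τ b

/-- The number of transversals of the Ferrers board `lam` avoiding the POP `p`. -/
noncomputable def POP.shapeAvoiders {k : ℕ} (p : POP k) {n : ℕ} (lam : Fin n → ℕ) : ℕ :=
  Nat.card {σ : Equiv.Perm (Fin n) // IsTransversal lam σ ∧ ¬ p.TContains lam σ}

/-- Shape-Wilf-equivalence of POPs: the same number of avoiding transversals for
every Ferrers board (a weakly decreasing positive row-length function). -/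
def ShapeWilfEquiv {k l : ℕ} (p : POP k) (q : POP l) : Prop :=
  ∀ (n : ℕ) (lam : Fin n → ℕ), Antitone lam → (∀ i, 0 < lam i) →
    p.shapeAvoiders lam = q.shapeAvoiders lam

/-- The ordinal sum `p ⊕ q` of POPs: labels `1, …, k` ordered as in `p`, labels
`k+1, …, k+l` ordered as in `q` (shifted), and every label `≤ k` strictly below
every label `> k`. -/
def OrdSum {k l : ℕ} (p : POP k) (q : POP l) : POP (k + l) where
  lt a b := (a ≤ k ∧ b ≤ k ∧ p.lt a b) ∨ (k < a ∧ k < b ∧ q.lt (a - k) (b - k)) ∨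
    (1 ≤ a ∧ a ≤ k ∧ k < b ∧ b ≤ k + l)
  supp a b h := by
    rcases h with ⟨_, _, h⟩ | ⟨ha, hb, h⟩ | h
    · have := p.supp _ _ h; omega
    · have := q.supp _ _ h; omega
    · omega
  irrefl a h := by
    rcases h with ⟨_, _, h⟩ | ⟨_, _, h⟩ | h
    · exact p.irrefl _ h
    · exact q.irrefl _ h
    · omega
  trans a b c hab hbc := by
    rcases hab with ⟨ha, hb, h1⟩ | ⟨ha, hb, h1⟩ | h1 <;>
      rcases hbc with ⟨hb', hc, h2⟩ | ⟨hb', hc, h2⟩ | h2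
    · exact Or.inl ⟨ha, hc, p.trans _ _ _ h1 h2⟩
    · omega
    · have := p.supp _ _ h1; right; right; omega
    · omega
    · exact Or.inr (Or.inl ⟨ha, hc, q.trans _ _ _ h1 h2⟩)
    · omega
    · omega
    · have := q.supp _ _ h2; right; right; omega
    · omega

/-- The disjoint sum `p + q` of POPs: labels `1, …, k` ordered as in `p`, labels
`k+1, …, k+l` ordered as in `q` (shifted), and no relations between the two parts. -/
def DisjSum {k l : ℕ} (p : POP k) (q : POP l) : POP (k + l) where
  lt a b := (a ≤ k ∧ b ≤ k ∧ p.lt a b) ∨ (k < a ∧ k < b ∧ q.lt (a - k) (b - k))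
  supp a b h := by
    rcases h with ⟨_, _, h⟩ | ⟨ha, hb, h⟩
    · have := p.supp _ _ h; omega
    · have := q.supp _ _ h; omega
  irrefl a h := by
    rcases h with ⟨_, _, h⟩ | ⟨_, _, h⟩
    · exact p.irrefl _ h
    · exact q.irrefl _ h
  trans a b c hab hbc := by
    rcases hab with ⟨ha, hb, h1⟩ | ⟨ha, hb, h1⟩ <;>
      rcases hbc with ⟨hb', hc, h2⟩ | ⟨hb', hc, h2⟩
    · exact Or.inl ⟨ha, hc, p.trans _ _ _ h1 h2⟩
    · omega
    · omega
    · exact Or.inr ⟨ha, hc, q.trans _ _ _ h1 h2⟩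

/-- The label `i` is isolated in the POP `p`: it is a label of `p` incomparable
to every other label. -/
def POP.Isolated {k : ℕ} (p : POP k) (i : ℕ) : Prop :=
  1 ≤ i ∧ i ≤ k ∧ ∀ j, ¬ p.lt i j ∧ ¬ p.lt j i

/-- The restriction of the POP `p` to the initial labels `{1, …, m}`. -/
def POP.restrictInit {k : ℕ} (p : POP k) (m : ℕ) : POP m where
  lt a b := a ≤ m ∧ b ≤ m ∧ p.lt a b
  supp a b h := by have := p.supp _ _ h.2.2; omega
  irrefl a h := p.irrefl a h.2.2
  trans a b c h1 h2 := ⟨h1.1, h2.2.1, p.trans _ _ _ h1.2.2 h2.2.2⟩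

/-- The reverse `r(p)` of a POP of size `k`: `a` is strictly below `b` iff
`k+1-a` is strictly below `k+1-b` in `p`. -/
def POP.rev {k : ℕ} (p : POP k) : POP k where
  lt a b := a ≤ k ∧ b ≤ k ∧ p.lt (k + 1 - a) (k + 1 - b)
  supp a b h := by
    obtain ⟨h1, h2, h3⟩ := h
    have := p.supp _ _ h3; omega
  irrefl a h := p.irrefl _ h.2.2
  trans a b c h1 h2 := ⟨h1.1, h2.2.1, p.trans _ _ _ h1.2.2 h2.2.2⟩

namespace Fin

variable {k l : ℕ}

theorem castAdd_lt_natAdd (a : Fin k) (b : Fin l) : castAdd l a < natAdd k b := by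
  simp only [lt_def, val_castAdd, val_natAdd]
  omega

theorem strictMono_append {α : Type*} [Preorder α] {f : Fin k → α} {g : Fin l → α}
    (hf : StrictMono f) (hg : StrictMono g) (hfg : ∀ a b, f a < g b) :
    StrictMono (append f g) := by
  intro x y hxy
  induction x using addCases <;> induction y using addCases <;>
    simp only [append_left, append_right] <;>
    simp only [lt_def, val_castAdd, val_natAdd] at hxy
  · exact hf (lt_def.2 hxy)
  · exact hfg _ _
  · omega
  · exact hg (lt_def.2 (by omega))

theorem exists_perm_castAdd_natAdd (τ : Equiv.Perm (Fin (k + l)))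
    (hτ : ∀ a b, τ (castAdd l a) < τ (natAdd k b)) :
    ∃ (τ₁ : Equiv.Perm (Fin k)) (τ₂ : Equiv.Perm (Fin l)),
      (∀ a, τ (castAdd l a) = castAdd l (τ₁ a)) ∧ ∀ b, τ (natAdd k b) = natAdd k (τ₂ b) := by
  -- pigeonhole: the `l` points above `τ (castAdd l a)`, resp. the `k` points below
  -- `τ (natAdd k b)`, must fit
  have hlow : ∀ a, (τ (castAdd l a) : ℕ) < k := fun a => by
    have := Finset.card_le_card_of_injOn (s := .univ) (t := .Ioi (τ (castAdd l a)))
      (fun b => τ (natAdd k b)) (fun b _ => Finset.mem_Ioi.2 (hτ a b))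
      (fun b _ b' _ h => (natAdd_inj k).1 (τ.injective h))
    simp only [Finset.card_univ, Fintype.card_fin, card_Ioi] at this
    omega
  have hhigh : ∀ b, k ≤ (τ (natAdd k b) : ℕ) := fun b => by
    have := Finset.card_le_card_of_injOn (s := .univ) (t := .Iio (τ (natAdd k b)))
      (fun a => τ (castAdd l a)) (fun a _ => Finset.mem_Iio.2 (hτ a b))
      (fun a _ a' _ h => castAdd_inj.1 (τ.injective h))
    simpa only [Finset.card_univ, Fintype.card_fin, card_Iio] using this
  have inj₁ : Function.Injective fun a => castLT (τ (castAdd l a)) (hlow a) :=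
    fun a a' h => castAdd_inj.1 (τ.injective (Fin.ext (congrArg val h :)))
  have inj₂ : Function.Injective fun b =>
      (⟨τ (natAdd k b) - k, by have := hhigh b; omega⟩ : Fin l) := fun b b' h => by
    have := hhigh b; have := hhigh b'
    exact (natAdd_inj k).1 (τ.injective (Fin.ext (by simp only [mk.injEq] at h; omega)))
  refine ⟨.ofBijective _ (Finite.injective_iff_bijective.1 inj₁),
    .ofBijective _ (Finite.injective_iff_bijective.1 inj₂), fun a => ?_, fun b => ?_⟩
  · ext; simp
  · ext; simp only [Equiv.ofBijective_apply, val_natAdd]; have := hhigh b; omega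

theorem mem_iff_lt_card_of_isLowerSet {m : ℕ} {S : Finset (Fin m)}
    (hS : IsLowerSet (S : Set (Fin m))) (b : Fin m) : b ∈ S ↔ (b : ℕ) < S.card := by
  constructor
  · intro hb
    have := Finset.card_le_card fun x hx => hS (Finset.mem_Iic.1 hx) hb
    rw [card_Iic] at this
    omega
  · intro hb
    by_contra hnb
    have := Finset.card_le_card fun x hx =>
      Finset.mem_Iio.2 (lt_of_not_ge fun hbx => hnb (hS hbx hx))
    rw [card_Iio] at this
    omega

end Fin

theorem Setoid.card_subtype_eq_of_card_classes {α : Type*} [Finite α] (s : Setoid α)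
    {P Q : α → Prop} (h : ∀ a, Nat.card {x // s a x ∧ P x} = Nat.card {x // s a x ∧ Q x}) :
    Nat.card {x // P x} = Nat.card {x // Q x} := by
  have byClass : ∀ R : α → Prop, {x // R x} ≃ Σ c : Quotient s, {x // s c.out x ∧ R x} :=
    fun R => (Equiv.sigmaFiberEquiv fun x : {x // R x} => (⟦x.1⟧ : Quotient s)).symm.trans <|
      Equiv.sigmaCongrRight fun c : Quotient s =>
        (Equiv.subtypeSubtypeEquivSubtypeInter R (⟦·⟧ = c)).trans <|
        Equiv.subtypeEquivRight fun x => by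
          rw [← Quotient.out_eq c, Quotient.eq, Quotient.out_eq]
          exact ⟨fun h => ⟨s.symm h.2, h.1⟩, fun h => ⟨h.2, s.symm h.1⟩⟩
  exact Nat.card_congr <| (byClass P).trans <| (Equiv.sigmaCongrRight fun c : Quotient s =>
    (Finite.card_eq.1 (h c.out)).some).trans (byClass Q).symm

namespace POP

variable {k n : ℕ}

def OccursIn (p : POP k) (G : Fin n → Fin n → Prop) (σ : Equiv.Perm (Fin n)) : Prop :=
  ∃ (r c : Fin k → Fin n) (τ : Equiv.Perm (Fin k)),
    StrictMono r ∧ StrictMono c ∧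
    (∀ i j, G (r i) (c j)) ∧
    (∀ j, σ (c j) = r (τ j)) ∧
    ∀ a b : Fin k, p.lt ((a : ℕ) + 1) ((b : ℕ) + 1) → τ a < τ b

theorem tContains_iff_occursIn (p : POP k) (lam : Fin n → ℕ) (σ : Equiv.Perm (Fin n)) :
    p.TContains lam σ ↔ p.OccursIn (fun i j => (j : ℕ) < lam i) σ :=
  Iff.rfl

variable {p : POP k} {G G' : Fin n → Fin n → Prop} {σ σ' : Equiv.Perm (Fin n)}

theorem OccursIn.mono (hG : ∀ i j, G i j → G' i j) (h : p.OccursIn G σ) : p.OccursIn G' σ := by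
  obtain ⟨r, c, τ, hr, hc, hcell, hσ, hτ⟩ := h
  exact ⟨r, c, τ, hr, hc, fun i j => hG _ _ (hcell i j), hσ, hτ⟩

theorem OccursIn.of_eqOn (hσ' : ∀ j, G (σ j) j → σ' j = σ j) (h : p.OccursIn G σ) :
    p.OccursIn G σ' := by
  obtain ⟨r, c, τ, hr, hc, hcell, hσ, hτ⟩ := h
  refine ⟨r, c, τ, hr, hc, hcell, fun j => ?_, hτ⟩
  rw [hσ' _ (by rw [hσ]; exact hcell _ _), hσ]

/-- Occurrences of `p` in `σ` whose `1`s all lie on the grid `rows × cols` are exactly the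
occurrences of `p` in the pattern `ρ` that `σ` induces on that grid. -/
theorem occursIn_iff_of_grid {m : ℕ} {rows cols : Fin m → Fin n} (hrows : StrictMono rows)
    (hcols : StrictMono cols) {ρ : Equiv.Perm (Fin m)} (hρ : ∀ b, σ (cols b) = rows (ρ b))
    (hG : ∀ j, G (σ j) j → j ∈ Set.range cols) :
    p.OccursIn G σ ↔ p.OccursIn (fun a b => G (rows a) (cols b)) ρ := by
  constructor
  · rintro ⟨r, c, τ, hr, hc, hcell, hσ, hτ⟩
    have hc_mem : ∀ j, c j ∈ Set.range cols := fun j => hG _ (by rw [hσ]; exact hcell _ _)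
    choose c' hc' using hc_mem
    have hr_eq : ∀ j, r (τ j) = rows (ρ (c' j)) := fun j => by rw [← hσ, ← hc', hρ]
    refine ⟨fun i => ρ (c' (τ.symm i)), c', τ, fun i i' hii' => ?_, fun j j' hjj' => ?_,
      fun i j => ?_, fun j => by simp, hτ⟩
    · rw [← hrows.lt_iff_lt, ← hr_eq, ← hr_eq]
      simpa using hr hii'
    · rw [← hcols.lt_iff_lt, hc', hc']
      exact hc hjj'
    · show G (rows (ρ (c' (τ.symm i)))) (cols (c' j))
      rw [← hr_eq, hc', Equiv.apply_symm_apply]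
      exact hcell _ _
  · rintro ⟨r, c, τ, hr, hc, hcell, hρσ, hτ⟩
    exact ⟨rows ∘ r, cols ∘ c, τ, hrows.comp hr, hcols.comp hc, hcell,
      fun j => by simp [hρ, hρσ], hτ⟩

end POP

section Blue

variable {n l : ℕ} (lam : Fin n → ℕ) (q : POP l)

def Blue (σ : Equiv.Perm (Fin n)) (i j : Fin n) : Prop :=
  (j : ℕ) < lam i ∧ q.OccursIn (fun a b => i < a ∧ j < b ∧ (b : ℕ) < lam a) σ

def AgreeOffBlue (σ σ' : Equiv.Perm (Fin n)) : Prop :=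
  (∀ j, ¬ Blue lam q σ (σ j) j → σ' j = σ j) ∧
    ∀ j, Blue lam q σ (σ j) j → Blue lam q σ (σ' j) j

variable {lam q} {σ σ' σ'' : Equiv.Perm (Fin n)}

theorem Blue.anti (hlam : Antitone lam) {i j i' j' : Fin n} (hi : i' ≤ i) (hj : j' ≤ j)
    (h : Blue lam q σ i j) : Blue lam q σ i' j' :=
  ⟨(Fin.le_def.1 hj).trans_lt (h.1.trans_le (hlam hi)),
    h.2.mono fun _ _ h => ⟨hi.trans_lt h.1, hj.trans_lt h.2.1, h.2.2⟩⟩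

theorem Blue.occursIn_nonblue {i j : Fin n} (h : Blue lam q σ i j) :
    q.OccursIn (fun a b => (i < a ∧ j < b ∧ (b : ℕ) < lam a) ∧
      (σ b = a → ¬ Blue lam q σ a b)) σ := by
  induction i using WellFoundedGT.induction generalizing j with
  | _ i ih =>
  obtain ⟨R, C, π, hR, hC, hcell, hσ, hπ⟩ := h.2
  by_cases hblue : ∃ b, Blue lam q σ (R (π b)) (C b)
  · -- a blue `1` of the occurrence has its own occurrence further north-east
    obtain ⟨b, hb⟩ := hblue
    obtain ⟨hi, hj, -⟩ := hcell (π b) b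
    exact (ih _ hi hb).mono fun _ _ h' =>
      ⟨⟨hi.trans h'.1.1, hj.trans h'.1.2.1, h'.1.2.2⟩, h'.2⟩
  · simp only [not_exists] at hblue
    refine ⟨R, C, π, hR, hC, fun a b => ⟨hcell a b, fun hab => ?_⟩, hσ, hπ⟩
    obtain rfl : a = π b := hR.injective (hab.symm.trans (hσ b))
    exact hblue b

theorem AgreeOffBlue.blue_iff (h : AgreeOffBlue lam q σ σ') {i j : Fin n} :
    Blue lam q σ' i j ↔ Blue lam q σ i j := by
  have blue_of_blue : ∀ i j, Blue lam q σ i j → Blue lam q σ' i j := fun i j hb =>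
    ⟨hb.1, (hb.occursIn_nonblue.of_eqOn fun b hb' => h.1 b (hb'.2 rfl)).mono
      fun _ _ h => h.1⟩
  refine ⟨fun hb => ⟨hb.1, (hb.occursIn_nonblue.of_eqOn fun b hb' => ?_).mono
    fun _ _ h => h.1⟩, blue_of_blue i j⟩
  by_cases hσb : Blue lam q σ (σ b) b
  · exact absurd (blue_of_blue _ _ (h.2 b hσb)) (hb'.2 rfl)
  · exact (h.1 b hσb).symm

theorem AgreeOffBlue.blue_one_iff (h : AgreeOffBlue lam q σ σ') (j : Fin n) :
    Blue lam q σ' (σ' j) j ↔ Blue lam q σ (σ j) j := by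
  refine ⟨fun hb => by_contra fun hσj => ?_, fun hb => h.blue_iff.2 (h.2 j hb)⟩
  rw [h.1 j hσj, h.blue_iff] at hb
  exact hσj hb

theorem AgreeOffBlue.refl (σ : Equiv.Perm (Fin n)) : AgreeOffBlue lam q σ σ :=
  ⟨fun _ _ => rfl, fun _ h => h⟩

theorem AgreeOffBlue.symm (h : AgreeOffBlue lam q σ σ') : AgreeOffBlue lam q σ' σ :=
  ⟨fun j hj => (h.1 j (mt (h.blue_one_iff j).2 hj)).symm,
    fun j hj => h.blue_iff.2 ((h.blue_one_iff j).1 hj)⟩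

theorem AgreeOffBlue.trans (h : AgreeOffBlue lam q σ σ') (h' : AgreeOffBlue lam q σ' σ'') :
    AgreeOffBlue lam q σ σ'' :=
  ⟨fun j hj => by rw [h'.1 j (mt (h.blue_one_iff j).1 hj), h.1 j hj],
    fun j hj => h.blue_iff.1 (h'.2 j ((h.blue_one_iff j).2 hj))⟩

theorem AgreeOffBlue.isTransversal (h : AgreeOffBlue lam q σ σ') (hσ : IsTransversal lam σ) :
    IsTransversal lam σ' := by
  intro j
  by_cases hj : Blue lam q σ (σ j) j
  · exact (h.2 j hj).1
  · rw [h.1 j hj]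
    exact hσ j

variable (lam q) in
def agreeOffBlueSetoid : Setoid (Equiv.Perm (Fin n)) :=
  ⟨AgreeOffBlue lam q, ⟨.refl, .symm, .trans⟩⟩

end Blue

section OrdSum

variable {k l : ℕ} (p : POP k) (q : POP l)

theorem ordSum_lt_castAdd_castAdd (a b : Fin k) :
    (OrdSum p q).lt ((Fin.castAdd l a : ℕ) + 1) ((Fin.castAdd l b : ℕ) + 1) ↔
      p.lt ((a : ℕ) + 1) ((b : ℕ) + 1) := by
  simp only [OrdSum, Fin.val_castAdd]
  have := a.isLt
  refine ⟨?_, fun h => Or.inl ⟨by omega, by omega, h⟩⟩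
  rintro (⟨-, -, h⟩ | ⟨h, -⟩ | ⟨-, -, h, -⟩) <;> first | exact h | omega

theorem ordSum_lt_natAdd_natAdd (a b : Fin l) :
    (OrdSum p q).lt ((Fin.natAdd k a : ℕ) + 1) ((Fin.natAdd k b : ℕ) + 1) ↔
      q.lt ((a : ℕ) + 1) ((b : ℕ) + 1) := by
  simp only [OrdSum, Fin.val_natAdd, Nat.add_assoc, Nat.add_sub_cancel_left]
  refine ⟨?_, fun h => Or.inr (Or.inl ⟨by omega, by omega, h⟩)⟩
  rintro (⟨h, -⟩ | ⟨-, -, h⟩ | ⟨-, h, -⟩) <;> first | exact h | omega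

theorem ordSum_lt_castAdd_natAdd (a : Fin k) (b : Fin l) :
    (OrdSum p q).lt ((Fin.castAdd l a : ℕ) + 1) ((Fin.natAdd k b : ℕ) + 1) := by
  simp only [OrdSum, Fin.val_castAdd, Fin.val_natAdd]
  omega

theorem not_ordSum_lt_natAdd_castAdd (a : Fin l) (b : Fin k) :
    ¬ (OrdSum p q).lt ((Fin.natAdd k a : ℕ) + 1) ((Fin.castAdd l b : ℕ) + 1) := by
  simp only [OrdSum, Fin.val_castAdd, Fin.val_natAdd]
  omega

theorem ordSum_lt_imp_permCongr_sumCongr_lt {τ : Equiv.Perm (Fin k)} {π : Equiv.Perm (Fin l)}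
    (hτ : ∀ a b : Fin k, p.lt ((a : ℕ) + 1) ((b : ℕ) + 1) → τ a < τ b)
    (hπ : ∀ a b : Fin l, q.lt ((a : ℕ) + 1) ((b : ℕ) + 1) → π a < π b) (x y : Fin (k + l))
    (hxy : (OrdSum p q).lt ((x : ℕ) + 1) ((y : ℕ) + 1)) :
    finSumFinEquiv.permCongr (τ.sumCongr π) x < finSumFinEquiv.permCongr (τ.sumCongr π) y := by
  induction x using Fin.addCases <;> induction y using Fin.addCases <;>
    simp only [Equiv.permCongr_apply, finSumFinEquiv_symm_apply_castAdd,
      finSumFinEquiv_symm_apply_natAdd, Equiv.sumCongr_apply, Sum.map_inl, Sum.map_inr,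
      finSumFinEquiv_apply_left, finSumFinEquiv_apply_right]
  · exact (Fin.strictMono_castAdd l).lt_iff_lt.2
      (hτ _ _ ((ordSum_lt_castAdd_castAdd p q _ _).1 hxy))
  · exact Fin.castAdd_lt_natAdd _ _
  · exact absurd hxy (not_ordSum_lt_natAdd_castAdd p q _ _)
  · exact (Fin.strictMono_natAdd k).lt_iff_lt.2
      (hπ _ _ ((ordSum_lt_natAdd_natAdd p q _ _).1 hxy))

end OrdSum

section OrdSumOccurrence

variable {n k l : ℕ} {lam : Fin n → ℕ} {p : POP k} {q : POP l} {σ : Equiv.Perm (Fin n)}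

theorem POP.OccursIn.blue_of_ordSum
    (h : (OrdSum p q).OccursIn (fun i j => (j : ℕ) < lam i) σ) :
    p.OccursIn (Blue lam q σ) σ := by
  obtain ⟨r, c, τ, hr, hc, hcell, hσ, hτ⟩ := h
  obtain ⟨τ₁, τ₂, hτ₁, hτ₂⟩ := Fin.exists_perm_castAdd_natAdd τ fun a b =>
    hτ _ _ (ordSum_lt_castAdd_natAdd p q a b)
  have hcast := Fin.strictMono_castAdd (n := k) l
  have hnat := Fin.strictMono_natAdd (m := l) k
  refine ⟨r ∘ Fin.castAdd l, c ∘ Fin.castAdd l, τ₁, hr.comp hcast, hc.comp hcast,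
    fun i j => ⟨hcell _ _, r ∘ Fin.natAdd k, c ∘ Fin.natAdd k, τ₂, hr.comp hnat, hc.comp hnat,
      fun a b => ⟨hr (Fin.castAdd_lt_natAdd _ _), hc (Fin.castAdd_lt_natAdd _ _), hcell _ _⟩,
      fun b => by simp [hσ, hτ₂], fun a b hab => ?_⟩,
    fun j => by simp [hσ, hτ₁], fun a b hab => ?_⟩
  · have := hτ _ _ ((ordSum_lt_natAdd_natAdd p q a b).2 hab)
    rwa [hτ₂, hτ₂, hnat.lt_iff_lt] at this
  · have := hτ _ _ ((ordSum_lt_castAdd_castAdd p q a b).2 hab)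
    rwa [hτ₁, hτ₁, hcast.lt_iff_lt] at this

/-- The occurrence of `q` north-east of the top-right cell of a blue occurrence of `p`
completes it to an occurrence of `p ⊕ q`. -/
theorem POP.OccursIn.ordSum_of_blue (hlam : Antitone lam) (hk : 0 < k)
    (h : p.OccursIn (Blue lam q σ) σ) :
    (OrdSum p q).OccursIn (fun i j => (j : ℕ) < lam i) σ := by
  obtain ⟨r, c, τ, hr, hc, hblue, hσ, hτ⟩ := h
  let last : Fin k := ⟨k - 1, by omega⟩
  have hle_last : ∀ i, i ≤ last := fun i => Fin.le_def.2 (by simp only [last]; omega)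
  obtain ⟨-, R, C, π, hR, hC, hcell, hσ', hπ⟩ := hblue last last
  have hrR : ∀ i a, r i < R a := fun i a => (hr.monotone (hle_last i)).trans_lt (hcell a a).1
  have hcC : ∀ j b, c j < C b := fun j b => (hc.monotone (hle_last j)).trans_lt (hcell b b).2.1
  refine ⟨Fin.append r R, Fin.append c C, finSumFinEquiv.permCongr (τ.sumCongr π),
    Fin.strictMono_append hr hR hrR, Fin.strictMono_append hc hC hcC, fun x y => ?_,
    fun y => ?_, ordSum_lt_imp_permCongr_sumCongr_lt p q hτ hπ⟩
  · induction x using Fin.addCases with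
    | left i => induction y using Fin.addCases with
      | left j => simpa using (hblue i j).1
      | right b => simpa using (hcell b b).2.2.trans_le (hlam (hrR i b).le)
    | right a => induction y using Fin.addCases with
      | left j => simpa using (Fin.lt_def.1 (hcC j a)).trans (hcell a a).2.2
      | right b => simpa using (hcell a b).2.2
  · induction y using Fin.addCases <;> simp [Equiv.permCongr_apply, hσ, hσ']

theorem ordSum_occursIn_iff (hlam : Antitone lam) (hk : 0 < k) :
    (OrdSum p q).OccursIn (fun i j => (j : ℕ) < lam i) σ ↔ p.OccursIn (Blue lam q σ) σ :=
  ⟨.blue_of_ordSum, .ordSum_of_blue hlam hk⟩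

end OrdSumOccurrence

noncomputable section BlueBoard

variable {n l : ℕ} (lam : Fin n → ℕ) (q : POP l) (σ₀ : Equiv.Perm (Fin n))

open scoped Classical in
def blueCols : Finset (Fin n) := {j | Blue lam q σ₀ (σ₀ j) j}

def blueRows : Finset (Fin n) := (blueCols lam q σ₀).map σ₀.toEmbedding

def numBlueOnes : ℕ := (blueCols lam q σ₀).card

def blueColIso : Fin (numBlueOnes lam q σ₀) ≃o blueCols lam q σ₀ :=
  (blueCols lam q σ₀).orderIsoOfFin rfl

def blueRowIso : Fin (numBlueOnes lam q σ₀) ≃o blueRows lam q σ₀ :=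
  (blueRows lam q σ₀).orderIsoOfFin (Finset.card_map _)

open scoped Classical in
/-- The row lengths of the board formed by the blue cells of `σ₀` on the grid of its blue rows
and columns; it is a Ferrers board by `blue_iff_lt_blueBoard`. -/
def blueBoard (a : Fin (numBlueOnes lam q σ₀)) : ℕ :=
  (Finset.univ.filter fun b =>
    Blue lam q σ₀ (blueRowIso lam q σ₀ a) (blueColIso lam q σ₀ b)).card

variable {lam q σ₀}

theorem mem_blueCols {j : Fin n} : j ∈ blueCols lam q σ₀ ↔ Blue lam q σ₀ (σ₀ j) j := by
  simp [blueCols]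

theorem apply_mem_blueRows_iff {j : Fin n} : σ₀ j ∈ blueRows lam q σ₀ ↔ j ∈ blueCols lam q σ₀ := by
  simp [blueRows]

theorem strictMono_blueColIso : StrictMono fun b => (blueColIso lam q σ₀ b : Fin n) :=
  (Subtype.strictMono_coe _).comp (OrderIso.strictMono _)

theorem strictMono_blueRowIso : StrictMono fun a => (blueRowIso lam q σ₀ a : Fin n) :=
  (Subtype.strictMono_coe _).comp (OrderIso.strictMono _)

theorem blue_iff_lt_blueBoard (hlam : Antitone lam) (a b : Fin (numBlueOnes lam q σ₀)) :
    Blue lam q σ₀ (blueRowIso lam q σ₀ a) (blueColIso lam q σ₀ b) ↔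
      (b : ℕ) < blueBoard lam q σ₀ a := by
  classical
  rw [blueBoard, ← Fin.mem_iff_lt_card_of_isLowerSet, Finset.mem_filter]
  · simp
  · intro b b' hb' hb
    simp only [Finset.coe_filter, Finset.mem_univ, true_and, Set.mem_ofPred_eq] at hb ⊢
    exact hb.anti hlam le_rfl (strictMono_blueColIso.monotone hb')

theorem blueBoard_antitone (hlam : Antitone lam) : Antitone (blueBoard lam q σ₀) :=
  fun a a' ha => Finset.card_le_card fun b hb => by
    simp only [Finset.mem_filter, Finset.mem_univ, true_and] at hb ⊢
    exact hb.anti hlam (strictMono_blueRowIso.monotone ha) le_rfl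

theorem blueBoard_pos (a : Fin (numBlueOnes lam q σ₀)) : 0 < blueBoard lam q σ₀ a := by
  classical
  obtain ⟨j, hj, hji⟩ := Finset.mem_map.1 (blueRowIso lam q σ₀ a).2
  refine Finset.card_pos.2 ⟨(blueColIso lam q σ₀).symm ⟨j, hj⟩,
    Finset.mem_filter.2 ⟨Finset.mem_univ _, ?_⟩⟩
  rw [OrderIso.apply_symm_apply, ← hji]
  exact mem_blueCols.1 hj

variable {σ : Equiv.Perm (Fin n)}

theorem AgreeOffBlue.mem_blueRows_iff (h : AgreeOffBlue lam q σ₀ σ) (j : Fin n) :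
    σ j ∈ blueRows lam q σ₀ ↔ j ∈ blueCols lam q σ₀ := by
  by_cases hj : j ∈ blueCols lam q σ₀
  · refine iff_of_true (by_contra fun hσj => ?_) hj
    -- otherwise the column `i` of the `1` of `σ₀` in row `σ j` is not blue, so `σ i = σ j`
    set i := σ₀.symm (σ j)
    have hi : i ∉ blueCols lam q σ₀ := by rwa [← apply_mem_blueRows_iff, Equiv.apply_symm_apply]
    have hσi : σ i = σ j := by rw [h.1 i (mt mem_blueCols.2 hi), Equiv.apply_symm_apply]
    exact hi (σ.injective hσi ▸ hj)
  · rw [h.1 j (mt mem_blueCols.2 hj), apply_mem_blueRows_iff]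

variable (σ₀) in
def blueRestrict (σ : {σ // AgreeOffBlue lam q σ₀ σ}) :
    Equiv.Perm (Fin (numBlueOnes lam q σ₀)) :=
  ((blueColIso lam q σ₀).toEquiv.trans
    (σ.1.subtypeEquiv fun j => (σ.2.mem_blueRows_iff j).symm)).trans
    (blueRowIso lam q σ₀).toEquiv.symm

variable (σ₀) in
def blueExtend (ρ : Equiv.Perm (Fin (numBlueOnes lam q σ₀))) : Equiv.Perm (Fin n) :=
  Equiv.subtypeCongr
    ((blueColIso lam q σ₀).toEquiv.symm.trans (ρ.trans (blueRowIso lam q σ₀).toEquiv))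
    (σ₀.subtypeEquiv fun _ => not_congr apply_mem_blueRows_iff.symm)

theorem blueRowIso_blueRestrict (σ : {σ // AgreeOffBlue lam q σ₀ σ})
    (b : Fin (numBlueOnes lam q σ₀)) :
    (blueRowIso lam q σ₀ (blueRestrict σ₀ σ b) : Fin n) = σ.1 (blueColIso lam q σ₀ b) := by
  simp [blueRestrict]

theorem blueExtend_blueColIso (ρ : Equiv.Perm (Fin (numBlueOnes lam q σ₀)))
    (b : Fin (numBlueOnes lam q σ₀)) :
    blueExtend σ₀ ρ (blueColIso lam q σ₀ b) = blueRowIso lam q σ₀ (ρ b) := by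
  simp [blueExtend, Equiv.subtypeCongr]

theorem blueExtend_of_notMem (ρ : Equiv.Perm (Fin (numBlueOnes lam q σ₀))) {j : Fin n}
    (hj : j ∉ blueCols lam q σ₀) : blueExtend σ₀ ρ j = σ₀ j := by
  simp [blueExtend, Equiv.subtypeCongr, hj]

theorem exists_blueColIso_eq {j : Fin n} (hj : j ∈ blueCols lam q σ₀) :
    ∃ b, (blueColIso lam q σ₀ b : Fin n) = j :=
  ⟨(blueColIso lam q σ₀).symm ⟨j, hj⟩, by simp⟩

theorem isTransversal_blueRestrict (hlam : Antitone lam) (σ : {σ // AgreeOffBlue lam q σ₀ σ}) :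
    IsTransversal (blueBoard lam q σ₀) (blueRestrict σ₀ σ) := fun b => by
  rw [← blue_iff_lt_blueBoard hlam, blueRowIso_blueRestrict]
  exact σ.2.2 _ (mem_blueCols.1 (blueColIso lam q σ₀ b).2)

theorem agreeOffBlue_blueExtend (hlam : Antitone lam) {ρ : Equiv.Perm (Fin (numBlueOnes lam q σ₀))}
    (hρ : IsTransversal (blueBoard lam q σ₀) ρ) : AgreeOffBlue lam q σ₀ (blueExtend σ₀ ρ) := by
  refine ⟨fun j hj => blueExtend_of_notMem ρ (mt mem_blueCols.1 hj), fun j hj => ?_⟩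
  obtain ⟨b, rfl⟩ := exists_blueColIso_eq (mem_blueCols.2 hj)
  rw [blueExtend_blueColIso]
  exact (blue_iff_lt_blueBoard hlam _ _).2 (hρ b)

def agreeOffBlueEquiv (hlam : Antitone lam) :
    {σ // AgreeOffBlue lam q σ₀ σ} ≃ {ρ // IsTransversal (blueBoard lam q σ₀) ρ} where
  toFun σ := ⟨blueRestrict σ₀ σ, isTransversal_blueRestrict hlam σ⟩
  invFun ρ := ⟨blueExtend σ₀ ρ.1, agreeOffBlue_blueExtend hlam ρ.2⟩
  left_inv σ := Subtype.ext <| Equiv.ext fun j => by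
    by_cases hj : j ∈ blueCols lam q σ₀
    · obtain ⟨b, rfl⟩ := exists_blueColIso_eq hj
      rw [blueExtend_blueColIso, blueRowIso_blueRestrict]
    · rw [blueExtend_of_notMem _ hj, σ.2.1 j (mt mem_blueCols.2 hj)]
  right_inv ρ := Subtype.ext <| Equiv.ext fun b => (blueRowIso lam q σ₀).injective <|
    Subtype.ext <| by rw [blueRowIso_blueRestrict, blueExtend_blueColIso]

theorem ordSum_tContains_iff_tContains_blueRestrict {k : ℕ} {p : POP k} (hlam : Antitone lam)
    (hk : 0 < k) (σ : {σ // AgreeOffBlue lam q σ₀ σ}) :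
    (OrdSum p q).TContains lam σ.1 ↔ p.TContains (blueBoard lam q σ₀) (blueRestrict σ₀ σ) := by
  have hblue : Blue lam q σ.1 = Blue lam q σ₀ := funext₂ fun _ _ => propext σ.2.blue_iff
  have hcells : (fun a b => Blue lam q σ₀ (blueRowIso lam q σ₀ a) (blueColIso lam q σ₀ b)) =
      fun a (b : Fin (numBlueOnes lam q σ₀)) => (b : ℕ) < blueBoard lam q σ₀ a :=
    funext₂ fun a b => propext (blue_iff_lt_blueBoard hlam a b)
  rw [POP.tContains_iff_occursIn, ordSum_occursIn_iff hlam hk, hblue,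
    POP.occursIn_iff_of_grid strictMono_blueRowIso strictMono_blueColIso
      (fun b => (blueRowIso_blueRestrict σ b).symm), hcells, POP.tContains_iff_occursIn]
  intro j hj
  exact exists_blueColIso_eq (mem_blueCols.2 ((σ.2.blue_one_iff j).1 (σ.2.blue_iff.2 hj)))

theorem card_agreeOffBlue_ordSum_avoiders {k : ℕ} (p : POP k) (hlam : Antitone lam) (hk : 0 < k)
    (hσ₀ : IsTransversal lam σ₀) :
    Nat.card {σ // AgreeOffBlue lam q σ₀ σ ∧
      (IsTransversal lam σ ∧ ¬ (OrdSum p q).TContains lam σ)} =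
      p.shapeAvoiders (blueBoard lam q σ₀) := by
  refine Nat.card_congr ?_
  calc {σ // AgreeOffBlue lam q σ₀ σ ∧ (IsTransversal lam σ ∧ ¬ (OrdSum p q).TContains lam σ)}
      ≃ {σ // AgreeOffBlue lam q σ₀ σ ∧ ¬ (OrdSum p q).TContains lam σ} :=
        Equiv.subtypeEquivRight fun σ =>
          ⟨fun h => ⟨h.1, h.2.2⟩, fun h => ⟨h.1, h.1.isTransversal hσ₀, h.2⟩⟩
    _ ≃ {σ : {σ // AgreeOffBlue lam q σ₀ σ} // ¬ (OrdSum p q).TContains lam σ.1} :=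
        (Equiv.subtypeSubtypeEquivSubtypeInter _ _).symm
    _ ≃ {ρ : {ρ // IsTransversal (blueBoard lam q σ₀) ρ} //
          ¬ p.TContains (blueBoard lam q σ₀) ρ.1} :=
        (agreeOffBlueEquiv hlam).subtypeEquiv fun σ =>
          not_congr (ordSum_tContains_iff_tContains_blueRestrict hlam hk σ)
    _ ≃ _ := Equiv.subtypeSubtypeEquivSubtypeInter (IsTransversal (blueBoard lam q σ₀))
        fun ρ => ¬ p.TContains (blueBoard lam q σ₀) ρ

end BlueBoard

theorem shapeAvoiders_ordSum_eq {n k k' l : ℕ} {p : POP k} {p' : POP k'} {q : POP l}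
    {lam : Fin n → ℕ} (hlam : Antitone lam) (hk : 0 < k) (hk' : 0 < k')
    (h : ∀ σ₀, p.shapeAvoiders (blueBoard lam q σ₀) = p'.shapeAvoiders (blueBoard lam q σ₀)) :
    (OrdSum p q).shapeAvoiders lam = (OrdSum p' q).shapeAvoiders lam := by
  refine Setoid.card_subtype_eq_of_card_classes (agreeOffBlueSetoid lam q) fun σ₀ => ?_
  by_cases hσ₀ : IsTransversal lam σ₀
  · exact (card_agreeOffBlue_ordSum_avoiders p hlam hk hσ₀).trans
      ((h σ₀).trans (card_agreeOffBlue_ordSum_avoiders p' hlam hk' hσ₀).symm)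
  · have hempty : ∀ P : Equiv.Perm (Fin n) → Prop,
        IsEmpty {σ // AgreeOffBlue lam q σ₀ σ ∧ (IsTransversal lam σ ∧ P σ)} :=
      fun _ => ⟨fun σ => hσ₀ (σ.2.1.symm.isTransversal σ.2.2.1)⟩
    exact (@Nat.card_of_isEmpty _ (hempty _)).trans (@Nat.card_of_isEmpty _ (hempty _)).symm

theorem POP.shapeAvoiders_of_isEmpty {k : ℕ} (p : POP k) (lam : Fin 0 → ℕ) :
    p.shapeAvoiders lam = if k = 0 then 0 else 1 := by
  split_ifs with hk
  · subst hk
    have hcontains : ∀ σ, p.TContains lam σ := fun σ =>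
      ⟨Fin.elim0, Fin.elim0, 1, fun a => a.elim0, fun a => a.elim0, fun i => i.elim0,
        fun j => j.elim0, fun a => a.elim0⟩
    exact @Nat.card_of_isEmpty _ ⟨fun σ => σ.2.2 (hcontains σ.1)⟩
  · have havoids : ∀ σ, IsTransversal lam σ ∧ ¬ p.TContains lam σ := fun σ =>
      ⟨fun j => j.elim0, fun ⟨_, c, _⟩ => (c ⟨0, Nat.pos_of_ne_zero hk⟩).elim0⟩
    rw [POP.shapeAvoiders, Nat.card_congr (Equiv.subtypeUnivEquiv havoids)]
    simp

instance : Subsingleton (POP 0) where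
  allEq p p' := by
    obtain ⟨lt, supp, -, -⟩ := p
    obtain ⟨lt', supp', -, -⟩ := p'
    obtain rfl : lt = lt' := funext₂ fun a b =>
      propext ⟨fun h => by have := supp a b h; omega, fun h => by have := supp' a b h; omega⟩
    rfl

/-- **Theorem 1.1 / 2.2 (Burstein–Han–Kitaev–Zhang).** If `p` is shape-Wilf-equivalent to
`p'`, then the ordinal sums `p ⊕ q` and `p' ⊕ q` are shape-Wilf-equivalent. -/
theorem ordinalSum_shapeWilfEquiv {k k' l : ℕ} (p : POP k) (p' : POP k') (q : POP l)
    (h : ShapeWilfEquiv p p') :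
    ShapeWilfEquiv (OrdSum p q) (OrdSum p' q) := by
  have hk : k = 0 ↔ k' = 0 := by
    have h₀ := h 0 Fin.elim0 (fun a => a.elim0) (fun i => i.elim0)
    rw [POP.shapeAvoiders_of_isEmpty, POP.shapeAvoiders_of_isEmpty] at h₀
    split_ifs at h₀ <;> simp_all
  rcases Nat.eq_zero_or_pos k with rfl | hk₀
  · obtain rfl := hk.1 rfl
    obtain rfl := Subsingleton.elim p p'
    exact fun _ _ _ _ => rfl
  · intro n lam hlam _
    exact shapeAvoiders_ordSum_eq hlam hk₀ (Nat.pos_of_ne_zero (mt hk.2 hk₀.ne'))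
      fun σ₀ => h _ _ (blueBoard_antitone hlam) blueBoard_pos
end

section
/- Let p, p' be POPs of size k whose sets of isolated labels are both equal to I = {i₁ < i₂ < ⋯ < i_s}, and suppose that in both p and p' every label in {1,…,i₁−1} is strictly below every label in {i₁,…,k}∖I. Let I_p, I_{p'} denote the restrictions of p, p' to {1,…,i₁−1} (POPs of size i₁−1), and let J_p, J_{p'} denote the restrictions of p, p' to {i₁,…,k}∖I. If I_p and I_{p'} are shape-Wilf-equivalent and J_p = J_{p'}, then p and p' are Wilf-equivalent. -/
/-!
Let `A = {1, …, i₁ - 1}` and call the labels `≥ i₁` the tail of `p`. In a permutation, call a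
point dark if no copy of the tail lies strictly north-east of it (larger positions, and larger
values at the non-isolated tail labels). A cell sees such a copy iff it sees one made of dark
points, so the dark set `S` alone decides which cells see a copy. As every label of `A` lies below
every non-isolated tail label, an occurrence of `p` is an occurrence of `I_p` among points whose
cells all see a copy, i.e. an occurrence of `I_p` in the Ferrers board formed by those cells in the
rows and columns free of `S`. Permutations with dark set `S` correspond to the transversals of
this board, so `|S_n(p)|` is the sum over `S` of the number of transversals of the board avoiding
`I_p`. The boards depend only on `J_p = J_{p'}`, and `I_p ∼ₛ I_{p'}` matches the summands.
-/

open Finset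

theorem Fin.strictMono_append_s1 {m t : ℕ} {α : Type*} [Preorder α] {u : Fin m → α}
    {v : Fin t → α} (hu : StrictMono u) (hv : StrictMono v) (huv : ∀ i j, u i < v j) :
    StrictMono (Fin.append u v) := by
  intro a b hab
  induction a using Fin.addCases <;> induction b using Fin.addCases <;>
    simp only [Fin.append_left, Fin.append_right]
  · exact hu ((Fin.strictMono_castAdd t).lt_iff_lt.1 hab)
  · exact huv _ _
  · simp [Fin.lt_def] at hab; omega
  · exact hv ((Fin.strictMono_natAdd m).lt_iff_lt.1 hab)

theorem Fin.lt_card_iff_mem_of_isLowerSet {q : ℕ} {s : Finset (Fin q)}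
    (hs : IsLowerSet (s : Set (Fin q))) (j : Fin q) : (j : ℕ) < #s ↔ j ∈ s := by
  constructor
  · intro hj
    by_contra hjs
    have hsub : s ⊆ Iio j := fun a ha => mem_Iio.2 <| lt_of_not_ge fun hja => hjs (hs hja ha)
    have := card_le_card hsub
    rw [Fin.card_Iio] at this
    omega
  · intro hj
    have := card_le_card fun a (ha : a ∈ Iic j) => hs (mem_Iic.1 ha) hj
    rw [Fin.card_Iic] at this
    omega

section FreeLines

variable {n : ℕ} {S : Finset (Fin n × Fin n)} {π : Equiv.Perm (Fin n)} {r c : Fin n}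

/-- Cells are `(row, column)` pairs, as in `IsTransversal`. -/
def permGraph (π : Equiv.Perm (Fin n)) : Finset (Fin n × Fin n) := {x | π x.2 = x.1}

@[simp] theorem mem_permGraph {x : Fin n × Fin n} : x ∈ permGraph π ↔ π x.2 = x.1 := by
  simp [permGraph]

def IsPartialPerm (S : Finset (Fin n × Fin n)) : Prop :=
  ∀ x ∈ S, ∀ y ∈ S, x.1 = y.1 ↔ x.2 = y.2

theorem isPartialPerm_of_subset_permGraph (h : S ⊆ permGraph π) : IsPartialPerm S := by
  intro x hx y hy
  rw [← mem_permGraph.1 (h hx), ← mem_permGraph.1 (h hy), π.apply_eq_iff_eq]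

def freeRows (S : Finset (Fin n × Fin n)) : Finset (Fin n) := univ \ S.image Prod.fst

def freeCols (S : Finset (Fin n × Fin n)) : Finset (Fin n) := univ \ S.image Prod.snd

theorem mem_freeRows : r ∈ freeRows S ↔ ∀ c, (r, c) ∉ S := by
  simp [freeRows]

theorem mem_freeCols : c ∈ freeCols S ↔ ∀ r, (r, c) ∉ S := by
  simp [freeCols]

theorem mem_freeCols_iff_of_subset (h : S ⊆ permGraph π) :
    c ∈ freeCols S ↔ (π c, c) ∉ S := by
  refine mem_freeCols.trans ⟨fun hc => hc _, fun hc r hr => hc ?_⟩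
  rwa [mem_permGraph.1 (h hr)]

theorem apply_mem_freeRows_iff (h : S ⊆ permGraph π) :
    π c ∈ freeRows S ↔ c ∈ freeCols S := by
  rw [mem_freeRows, mem_freeCols_iff_of_subset h]
  refine ⟨fun hc => hc c, fun hc c' hc' => hc ?_⟩
  obtain rfl : c' = c := π.injective (mem_permGraph.1 (h hc'))
  exact hc'

theorem card_freeRows_of_subset (h : S ⊆ permGraph π) : #(freeRows S) = #(freeCols S) := by
  rw [← card_map (s := freeCols S) π.toEmbedding]
  congr 1
  ext r
  rw [mem_map_equiv, ← apply_mem_freeRows_iff h, π.apply_symm_apply]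

def colIso (S : Finset (Fin n × Fin n)) : Fin #(freeCols S) ≃o freeCols S :=
  (freeCols S).orderIsoOfFin rfl

def rowIso (h : #(freeRows S) = #(freeCols S)) : Fin #(freeCols S) ≃o freeRows S :=
  (freeRows S).orderIsoOfFin h

end FreeLines

noncomputable section PermExtension

open scoped Classical

variable {n : ℕ} {S : Finset (Fin n × Fin n)} {π : Equiv.Perm (Fin n)}
  (hc : #(freeRows S) = #(freeCols S)) {σ : Equiv.Perm (Fin #(freeCols S))}

/-- A permutation extending `S` permutes the free lines of `S`. -/
def reduce (h : S ⊆ permGraph π) : Equiv.Perm (Fin #(freeCols S)) :=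
  ((colIso S).toEquiv.trans (π.subtypeEquiv fun _ => (apply_mem_freeRows_iff h).symm)).trans
    (rowIso hc).symm.toEquiv

theorem rowIso_reduce (h : S ⊆ permGraph π) (j : Fin #(freeCols S)) :
    (rowIso hc (reduce hc h j) : Fin n) = π (colIso S j) := by
  simp [reduce]

def extendFun (σ : Equiv.Perm (Fin #(freeCols S))) (c : Fin n) : Fin n :=
  if h : ∃ r, (r, c) ∈ S then h.choose
  else rowIso hc (σ ((colIso S).symm ⟨c, mem_freeCols.2 fun r hr => h ⟨r, hr⟩⟩))

variable {hc}

theorem extendFun_of_mem (hS : IsPartialPerm S) {r c : Fin n} (hrc : (r, c) ∈ S) :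
    extendFun hc σ c = r := by
  have h : ∃ r, (r, c) ∈ S := ⟨r, hrc⟩
  rw [extendFun, dif_pos h]
  exact (hS _ h.choose_spec _ hrc).2 rfl

theorem extendFun_colIso (j : Fin #(freeCols S)) :
    extendFun hc σ (colIso S j) = rowIso hc (σ j) := by
  have h : ¬ ∃ r, (r, (colIso S j : Fin n)) ∈ S := fun ⟨r, hr⟩ =>
    mem_freeCols.1 (colIso S j).2 r hr
  rw [extendFun, dif_neg h]
  simp

theorem exists_colIso_or_mem (S : Finset (Fin n × Fin n)) (c : Fin n) :
    (∃ j, (colIso S j : Fin n) = c) ∨ ∃ r, (r, c) ∈ S := by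
  by_cases h : ∃ r, (r, c) ∈ S
  · exact Or.inr h
  · exact Or.inl ⟨(colIso S).symm ⟨c, mem_freeCols.2 fun r hr => h ⟨r, hr⟩⟩, by simp⟩

theorem extendFun_injective (hS : IsPartialPerm S) : Function.Injective (extendFun hc σ) := by
  have hfree : ∀ j r c, (r, c) ∈ S → extendFun hc σ (colIso S j) ≠ extendFun hc σ c := by
    intro j r c hrc
    rw [extendFun_colIso, extendFun_of_mem hS hrc]
    rintro rfl
    exact mem_freeRows.1 (rowIso hc (σ j)).2 c hrc
  intro c₁ c₂ h
  rcases exists_colIso_or_mem S c₁ with ⟨j₁, rfl⟩ | ⟨r₁, h₁⟩ <;>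
    rcases exists_colIso_or_mem S c₂ with ⟨j₂, rfl⟩ | ⟨r₂, h₂⟩
  · rw [extendFun_colIso, extendFun_colIso] at h
    rw [σ.injective ((rowIso hc).injective (Subtype.ext h))]
  · exact absurd h (hfree _ _ _ h₂)
  · exact absurd h.symm (hfree _ _ _ h₁)
  · rw [extendFun_of_mem hS h₁, extendFun_of_mem hS h₂] at h
    subst h
    exact (hS _ h₁ _ h₂).1 rfl

variable (hc) in
def extend (hS : IsPartialPerm S) (σ : Equiv.Perm (Fin #(freeCols S))) : Equiv.Perm (Fin n) :=
  Equiv.ofBijective (extendFun hc σ) (Finite.injective_iff_bijective.1 (extendFun_injective hS))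

theorem extend_of_mem (hS : IsPartialPerm S) {r c : Fin n} (hrc : (r, c) ∈ S) :
    extend hc hS σ c = r :=
  extendFun_of_mem hS hrc

theorem extend_colIso (hS : IsPartialPerm S) (j : Fin #(freeCols S)) :
    extend hc hS σ (colIso S j) = rowIso hc (σ j) :=
  extendFun_colIso j

variable (hc) in
theorem subset_permGraph_extend (hS : IsPartialPerm S) (σ : Equiv.Perm (Fin #(freeCols S))) :
    S ⊆ permGraph (extend hc hS σ) :=
  fun _ hx => mem_permGraph.2 (extend_of_mem hS hx)

theorem reduce_extend (hS : IsPartialPerm S) : reduce hc (subset_permGraph_extend hc hS σ) = σ :=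
  Equiv.ext fun j => (rowIso hc).injective <| Subtype.ext <| by
    rw [rowIso_reduce, extend_colIso]

theorem extend_reduce (hS : IsPartialPerm S) (h : S ⊆ permGraph π) :
    extend hc hS (reduce hc h) = π := by
  ext c : 1
  rcases exists_colIso_or_mem S c with ⟨j, rfl⟩ | ⟨r, hrc⟩
  · rw [extend_colIso, rowIso_reduce]
  · rw [extend_of_mem hS hrc]
    exact (mem_permGraph.1 (h hrc)).symm

end PermExtension

/-- The tail of a POP on `t` consecutive labels: the values of the active labels are constrained
by `lt`, the inactive (isolated) ones only occupy positions. -/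
structure TailPattern (t : ℕ) where
  IsActive : Fin t → Prop
  lt : Fin t → Fin t → Prop
  isActive_of_lt : ∀ a b, lt a b → IsActive a ∧ IsActive b

noncomputable section

namespace TailPattern

open scoped Classical

variable {n t : ℕ} (T : TailPattern t)

/-- A copy of `T` strictly north-east of the cell `(i, j)`: slot `b` lies in column `g b`, and
an active slot has its point `(v b, g b)` in `P`. -/
def OccursNE (P : Finset (Fin n × Fin n)) (i j : Fin n) : Prop :=
  ∃ g v : Fin t → Fin n, StrictMono g ∧ (∀ b, j < g b) ∧
    (∀ b, T.IsActive b → (v b, g b) ∈ P ∧ i < v b) ∧ ∀ a b, T.lt a b → v a < v b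

def dark (Q : Finset (Fin n × Fin n)) : Finset (Fin n × Fin n) :=
  {x ∈ Q | ¬ T.OccursNE Q x.1 x.2}

/-- `exists_occursNE` makes every row of the board `shape` nonempty. -/
structure Admissible (S : Finset (Fin n × Fin n)) : Prop where
  isPartialPerm : IsPartialPerm S
  not_occursNE : ∀ x ∈ S, ¬ T.OccursNE S x.1 x.2
  exists_occursNE : ∀ r ∈ freeRows S, ∃ c ∈ freeCols S, T.OccursNE S r c
  card_freeRows : #(freeRows S) = #(freeCols S)

variable {T} {P Q S : Finset (Fin n × Fin n)} {x : Fin n × Fin n} {i j i' j' : Fin n}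

theorem OccursNE.anti (h : T.OccursNE P i j) (hi : i' ≤ i) (hj : j' ≤ j) :
    T.OccursNE P i' j' := by
  obtain ⟨g, v, hg, hgj, hact, hlt⟩ := h
  exact ⟨g, v, hg, fun b => hj.trans_lt (hgj b),
    fun b hb => ⟨(hact b hb).1, hi.trans_lt (hact b hb).2⟩, hlt⟩

theorem OccursNE.mono (h : T.OccursNE P i j) (hPQ : P ⊆ Q) : T.OccursNE Q i j := by
  obtain ⟨g, v, hg, hgj, hact, hlt⟩ := h
  exact ⟨g, v, hg, hgj, fun b hb => ⟨hPQ (hact b hb).1, (hact b hb).2⟩, hlt⟩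

theorem OccursNE.of_forall
    (hQS : ∀ x ∈ Q, i < x.1 → j < x.2 → x ∉ S → T.OccursNE S x.1 x.2)
    (h : T.OccursNE Q i j) : T.OccursNE S i j := by
  obtain ⟨g, v, hg, hgj, hact, hlt⟩ := h
  by_cases hout : ∃ b, T.IsActive b ∧ (v b, g b) ∉ S
  · obtain ⟨b, hb, hbS⟩ := hout
    exact (hQS _ (hact b hb).1 (hact b hb).2 (hgj b) hbS).anti (hact b hb).2.le (hgj b).le
  · refine ⟨g, v, hg, hgj, fun b hb => ⟨?_, (hact b hb).2⟩, hlt⟩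
    by_contra hbS
    exact hout ⟨b, hb, hbS⟩

-- Downward induction on the column: a point of `Q` outside `dark Q` has a copy further east.
theorem OccursNE.dark (h : T.OccursNE Q i j) : T.OccursNE (T.dark Q) i j := by
  induction j using WellFoundedGT.induction generalizing i with
  | _ j ih =>
    refine h.of_forall fun x hxQ _ hjx hx => ih x.2 hjx ?_
    simpa [TailPattern.dark, hxQ] using hx

theorem occursNE_iff (hSQ : S ⊆ Q) (hQS : ∀ x ∈ Q, x ∉ S → T.OccursNE S x.1 x.2) :
    T.OccursNE Q i j ↔ T.OccursNE S i j :=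
  ⟨OccursNE.of_forall fun x hx _ _ => hQS x hx, fun h => h.mono hSQ⟩

theorem dark_subset : T.dark Q ⊆ Q := filter_subset _ _

theorem not_occursNE_dark (hx : x ∈ T.dark Q) : ¬ T.OccursNE (T.dark Q) x.1 x.2 :=
  fun h => (mem_filter.1 hx).2 (h.mono dark_subset)

theorem occursNE_dark_of_notMem (hx : x ∈ Q) (hxd : x ∉ T.dark Q) :
    T.OccursNE (T.dark Q) x.1 x.2 :=
  OccursNE.dark (by simpa [TailPattern.dark, hx] using hxd)

theorem dark_eq (hSQ : S ⊆ Q) (hS : ∀ x ∈ S, ¬ T.OccursNE S x.1 x.2)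
    (hQS : ∀ x ∈ Q, x ∉ S → T.OccursNE S x.1 x.2) : T.dark Q = S := by
  ext x
  simp only [TailPattern.dark, mem_filter, occursNE_iff hSQ hQS]
  by_cases hx : x ∈ S
  · simp [hx, hSQ hx, hS x hx]
  · simpa [hx] using hQS x

variable {π : Equiv.Perm (Fin n)}

variable (T) in
theorem admissible_dark (π : Equiv.Perm (Fin n)) : T.Admissible (T.dark (permGraph π)) where
  isPartialPerm := isPartialPerm_of_subset_permGraph dark_subset
  not_occursNE _ hx := not_occursNE_dark hx
  exists_occursNE r hr := by
    have hgraph : (r, π.symm r) ∈ permGraph π := by simp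
    have hdark : (r, π.symm r) ∉ T.dark (permGraph π) := mem_freeRows.1 hr _
    refine ⟨π.symm r, ?_, occursNE_dark_of_notMem hgraph hdark⟩
    rwa [← apply_mem_freeRows_iff dark_subset, π.apply_symm_apply]
  card_freeRows := card_freeRows_of_subset dark_subset

theorem dark_permGraph_eq_iff (hS : T.Admissible S) :
    T.dark (permGraph π) = S ↔
      S ⊆ permGraph π ∧ ∀ x ∈ permGraph π, x ∉ S → T.OccursNE S x.1 x.2 := by
  constructor
  · rintro rfl
    exact ⟨dark_subset, fun _ hx hxd => occursNE_dark_of_notMem hx hxd⟩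
  · exact fun h => dark_eq h.1 hS.not_occursNE h.2

variable (T) in
/-- The Ferrers board on the free rows and columns of `S`, made of the cells that see a copy
of `T` in `S` to the north-east. -/
def shape (hS : T.Admissible S) (i : Fin #(freeCols S)) : ℕ :=
  #{j | T.OccursNE S (rowIso hS.card_freeRows i) (colIso S j)}

theorem lt_shape_iff (hS : T.Admissible S) (i j : Fin #(freeCols S)) :
    (j : ℕ) < T.shape hS i ↔ T.OccursNE S (rowIso hS.card_freeRows i) (colIso S j) := by
  rw [shape, Fin.lt_card_iff_mem_of_isLowerSet, mem_filter]
  · simp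
  · intro a b hba ha
    simp only [coe_filter, mem_univ, true_and, Set.mem_ofPred_eq] at ha ⊢
    exact ha.anti le_rfl ((colIso S).monotone hba)

theorem shape_antitone (hS : T.Admissible S) : Antitone (T.shape hS) := fun a b hab =>
  card_le_card fun j hj => by
    simp only [mem_filter, mem_univ, true_and] at hj ⊢
    exact hj.anti ((rowIso hS.card_freeRows).monotone hab) le_rfl

theorem shape_pos (hS : T.Admissible S) (i : Fin #(freeCols S)) : 0 < T.shape hS i := by
  obtain ⟨c, hc, hcopy⟩ := hS.exists_occursNE _ (rowIso hS.card_freeRows i).2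
  refine card_pos.2 ⟨(colIso S).symm ⟨c, hc⟩, ?_⟩
  simpa using hcopy

theorem isTransversal_reduce (hS : T.Admissible S) (h : S ⊆ permGraph π)
    (hcopy : ∀ x ∈ permGraph π, x ∉ S → T.OccursNE S x.1 x.2) :
    IsTransversal (T.shape hS) (reduce hS.card_freeRows h) := by
  intro j
  rw [lt_shape_iff, rowIso_reduce]
  exact hcopy _ (by simp) ((mem_freeCols_iff_of_subset h).1 (colIso S j).2)

theorem occursNE_of_isTransversal (hS : T.Admissible S) {σ : Equiv.Perm (Fin #(freeCols S))}
    (hσ : IsTransversal (T.shape hS) σ) :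
    ∀ x ∈ permGraph (extend hS.card_freeRows hS.isPartialPerm σ), x ∉ S →
      T.OccursNE S x.1 x.2 := by
  rintro ⟨r, c⟩ hx hxS
  obtain rfl : extend hS.card_freeRows hS.isPartialPerm σ c = r := mem_permGraph.1 hx
  rcases exists_colIso_or_mem S c with ⟨j, rfl⟩ | ⟨r, hrc⟩
  · rw [extend_colIso]
    exact (lt_shape_iff hS _ _).1 (hσ j)
  · rw [extend_of_mem hS.isPartialPerm hrc] at hxS
    exact absurd hrc hxS

variable (T) in
def fiberEquiv (hS : T.Admissible S) :
    {π : Equiv.Perm (Fin n) // T.dark (permGraph π) = S} ≃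
      {σ // IsTransversal (T.shape hS) σ} where
  toFun π := ⟨reduce hS.card_freeRows ((dark_permGraph_eq_iff hS).1 π.2).1,
    isTransversal_reduce hS _ ((dark_permGraph_eq_iff hS).1 π.2).2⟩
  invFun σ := ⟨extend hS.card_freeRows hS.isPartialPerm σ,
    (dark_permGraph_eq_iff hS).2
      ⟨subset_permGraph_extend _ hS.isPartialPerm σ, occursNE_of_isTransversal hS σ.2⟩⟩
  left_inv π := Subtype.ext (extend_reduce hS.isPartialPerm ((dark_permGraph_eq_iff hS).1 π.2).1)
  right_inv _ := Subtype.ext (reduce_extend hS.isPartialPerm)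

variable {m : ℕ} (A : POP m)

variable (T) in
/-- An occurrence of `A` south-west of an occurrence of `T`. -/
def OccursUnder (π : Equiv.Perm (Fin n)) : Prop :=
  ∃ (f : Fin m → Fin n) (g : Fin t → Fin n), StrictMono f ∧ StrictMono g ∧
    (∀ a b, f a < g b) ∧ (∀ a b : Fin m, A.lt (a + 1) (b + 1) → π (f a) < π (f b)) ∧
    (∀ a b, T.IsActive b → π (f a) < π (g b)) ∧ ∀ a b, T.lt a b → π (g a) < π (g b)

variable {A}

theorem tContains_reduce_of_occursUnder (hS : T.Admissible S) (h : S ⊆ permGraph π)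
    (hcopy : ∀ x ∈ permGraph π, x ∉ S → T.OccursNE S x.1 x.2) (hocc : T.OccursUnder A π) :
    A.TContains (T.shape hS) (reduce hS.card_freeRows h) := by
  obtain ⟨f, g, hf, hg, hfg, hA, hact, hlt⟩ := hocc
  have hcopyA : ∀ a a', T.OccursNE S (π (f a)) (f a') := fun a a' =>
    (occursNE_iff h hcopy).1
      ⟨g, fun b => π (g b), hg, hfg a', fun b hb => ⟨by simp, hact a b hb⟩, hlt⟩
  -- the points of the occurrence see the copy of `T`, so they are not dark
  have hfree : ∀ a, f a ∈ freeCols S := fun a =>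
    (mem_freeCols_iff_of_subset h).2 fun hfa => hS.not_occursNE _ hfa (hcopyA a a)
  set τ := Tuple.sort (π ∘ f)
  have hsort : StrictMono (π ∘ f ∘ τ) := (Tuple.monotone_sort _).strictMono_of_injective
    ((π.injective.comp hf.injective).comp τ.injective)
  refine ⟨fun i => (rowIso hS.card_freeRows).symm
      ⟨π (f (τ i)), (apply_mem_freeRows_iff h).2 (hfree _)⟩,
    fun j => (colIso S).symm ⟨f j, hfree j⟩, τ.symm, ?_, ?_, ?_, ?_, ?_⟩
  · exact fun i i' hii' =>
      (rowIso hS.card_freeRows).symm.strictMono (Subtype.mk_lt_mk.2 (hsort hii'))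
  · exact fun j j' hjj' => (colIso S).symm.strictMono (Subtype.mk_lt_mk.2 (hf hjj'))
  · intro i j
    simpa [lt_shape_iff] using hcopyA (τ i) j
  · intro j
    refine (rowIso hS.card_freeRows).injective (Subtype.ext ?_)
    simp [rowIso_reduce]
  · intro a b hab
    rw [← hsort.lt_iff_lt]
    simpa using hA a b hab

theorem occursUnder_of_tContains_reduce (hm : 0 < m) (hS : T.Admissible S)
    (h : S ⊆ permGraph π) (hcont : A.TContains (T.shape hS) (reduce hS.card_freeRows h)) :
    T.OccursUnder A π := by
  obtain ⟨r, c, τ, hr, hc, hcell, hσ, hA⟩ := hcont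
  have hπf : ∀ j, π (colIso S (c j)) = rowIso hS.card_freeRows (r (τ j)) := fun j => by
    rw [← rowIso_reduce hS.card_freeRows h, hσ]
  -- the copy of `T` seen from the cell `(r last, c last)` lies north-east of all of `A`
  let last : Fin m := ⟨m - 1, by omega⟩
  have hlast : ∀ a, a ≤ last := fun a => Fin.le_def.2 (by simp [last]; omega)
  obtain ⟨g, v, hg, hgc, hactv, hltv⟩ := (lt_shape_iff hS _ _).1 (hcell last last)
  have hπg : ∀ b, T.IsActive b → π (g b) = v b := fun b hb =>
    mem_permGraph.1 (h (hactv b hb).1)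
  refine ⟨fun j => colIso S (c j), g, ?_, hg, ?_, ?_, ?_, ?_⟩
  · exact fun a b hab => (colIso S).strictMono (hc hab)
  · exact fun a b =>
      (Subtype.coe_le_coe.2 ((colIso S).monotone (hc.monotone (hlast a)))).trans_lt (hgc b)
  · intro a b hab
    simp only [hπf]
    exact (rowIso hS.card_freeRows).strictMono (hr (hA a b hab))
  · intro a b hb
    simp only [hπf, hπg b hb]
    exact (Subtype.coe_le_coe.2 ((rowIso hS.card_freeRows).monotone
      (hr.monotone (hlast _)))).trans_lt (hactv b hb).2
  · intro a b hab
    obtain ⟨ha, hb⟩ := T.isActive_of_lt a b hab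
    rw [hπg a ha, hπg b hb]
    exact hltv a b hab

theorem occursUnder_iff_tContains (hm : 0 < m) (hS : T.Admissible S)
    (π : {π : Equiv.Perm (Fin n) // T.dark (permGraph π) = S}) :
    T.OccursUnder A π.1 ↔ A.TContains (T.shape hS) (T.fiberEquiv hS π).1 :=
  ⟨tContains_reduce_of_occursUnder hS ((dark_permGraph_eq_iff hS).1 π.2).1
      ((dark_permGraph_eq_iff hS).1 π.2).2,
    occursUnder_of_tContains_reduce hm hS ((dark_permGraph_eq_iff hS).1 π.2).1⟩

def avoidersFiberEquiv (hm : 0 < m) (hS : T.Admissible S) :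
    {π : Equiv.Perm (Fin n) // T.dark (permGraph π) = S ∧ ¬ T.OccursUnder A π} ≃
      {σ // IsTransversal (T.shape hS) σ ∧ ¬ A.TContains (T.shape hS) σ} :=
  (Equiv.subtypeSubtypeEquivSubtypeInter _ _).symm.trans <|
    ((T.fiberEquiv hS).subtypeEquiv fun π =>
      not_congr (occursUnder_iff_tContains hm hS π)).trans
        (Equiv.subtypeSubtypeEquivSubtypeInter _ _)

variable (T A) in
def avoidersSigmaEquiv :
    {π : Equiv.Perm (Fin n) // ¬ T.OccursUnder A π} ≃
      Σ S : {S : Finset (Fin n × Fin n) // T.Admissible S},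
        {π : Equiv.Perm (Fin n) // T.dark (permGraph π) = S.1 ∧ ¬ T.OccursUnder A π} where
  toFun π := ⟨⟨_, T.admissible_dark π.1⟩, π.1, rfl, π.2⟩
  invFun x := ⟨x.2.1, x.2.2.2⟩
  left_inv _ := rfl
  right_inv x := Sigma.subtype_ext (Subtype.ext x.2.2.1) rfl

theorem card_not_occursUnder (hm : 0 < m) :
    Nat.card {π : Equiv.Perm (Fin n) // ¬ T.OccursUnder A π} =
      ∑ S : {S : Finset (Fin n × Fin n) // T.Admissible S}, A.shapeAvoiders (T.shape S.2) := by
  rw [Nat.card_congr (avoidersSigmaEquiv T A), Nat.card_sigma]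
  exact sum_congr rfl fun S _ => Nat.card_congr (avoidersFiberEquiv hm S.2)

end TailPattern

end

namespace POP

variable {k : ℕ}

theorem ext_lt {p q : POP k} (h : ∀ a b, p.lt a b ↔ q.lt a b) : p = q := by
  cases p
  cases q
  congr
  ext a b
  exact h a b

theorem notMem_of_lt {p : POP k} {I : Finset ℕ} (hI : ∀ i, p.Isolated i ↔ i ∈ I) {a b : ℕ}
    (h : p.lt a b) : a ∉ I ∧ b ∉ I :=
  ⟨fun ha => (((hI a).2 ha).2.2 b).1 h, fun hb => (((hI b).2 hb).2.2 a).2 h⟩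

theorem lt_iff_lt_of_isolated {p q : POP k} {I : Finset ℕ} (hp : ∀ i, p.Isolated i ↔ i ∈ I)
    (hq : ∀ i, q.Isolated i ↔ i ∈ I) {l : ℕ}
    (h : ∀ a b, l ≤ a → a ≤ k → a ∉ I → l ≤ b → b ≤ k → b ∉ I → (p.lt a b ↔ q.lt a b))
    {a b : ℕ} (ha : l ≤ a) (hb : l ≤ b) : p.lt a b ↔ q.lt a b := by
  refine ⟨fun hab => ?_, fun hab => ?_⟩
  · obtain ⟨-, hak, -, hbk⟩ := p.supp a b hab
    exact (h a b ha hak (p.notMem_of_lt hp hab).1 hb hbk (p.notMem_of_lt hp hab).2).1 hab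
  · obtain ⟨-, hak, -, hbk⟩ := q.supp a b hab
    exact (h a b ha hak (q.notMem_of_lt hq hab).1 hb hbk (q.notMem_of_lt hq hab).2).2 hab

def tailPattern (P : POP k) (I : Finset ℕ) (m : ℕ) (hI : ∀ i, P.Isolated i ↔ i ∈ I) :
    TailPattern (k - m) where
  IsActive b := m + b + 1 ∉ I
  lt a b := P.lt (m + a + 1) (m + b + 1)
  isActive_of_lt _ _ h := P.notMem_of_lt hI h

section Tail

variable {m t : ℕ} (P : POP k) (T : TailPattern t) (hk : m + t = k)
  (hinactive : ∀ b : Fin t, ¬ T.IsActive b → P.Isolated (m + b + 1))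
  (hbelow : ∀ (a : Fin m) (b : Fin t), T.IsActive b → P.lt (a + 1) (m + b + 1))
  (hlt : ∀ a b : Fin t, T.lt a b ↔ P.lt (m + a + 1) (m + b + 1))
include hk hinactive hbelow hlt

theorem occurs_iff_occursUnder {n : ℕ} (π : Equiv.Perm (Fin n)) :
    P.Occurs π ↔ T.OccursUnder (P.restrictInit m) π := by
  subst hk
  have hnot : ∀ (a : Fin m) (b : Fin t), ¬ P.lt (m + b + 1) (a + 1) := by
    intro a b h
    by_cases hb : T.IsActive b
    · exact P.irrefl _ (P.trans _ _ _ h (hbelow a b hb))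
    · exact ((hinactive b hb).2.2 _).1 h
  constructor
  · rintro ⟨f, hf, hrel⟩
    refine ⟨f ∘ Fin.castAdd t, f ∘ Fin.natAdd m, hf.comp (Fin.strictMono_castAdd t),
      hf.comp (Fin.strictMono_natAdd m), fun a b => hf ?_, fun a b hab => hrel _ _ ?_,
      fun a b hb => hrel _ _ ?_, fun a b hab => hrel _ _ ?_⟩
    · simp [Fin.lt_def]
      omega
    · simpa using hab.2.2
    · simpa using hbelow a b hb
    · simpa using (hlt a b).1 hab
  · rintro ⟨f, g, hf, hg, hfg, hA, hact, hlt'⟩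
    refine ⟨Fin.append f g, Fin.strictMono_append_s1 hf hg hfg, fun a b hab => ?_⟩
    induction a using Fin.addCases <;> induction b using Fin.addCases <;>
      simp only [Fin.append_left, Fin.append_right, Fin.val_castAdd, Fin.val_natAdd] at hab ⊢
    · exact hA _ _ ⟨by omega, by omega, hab⟩
    · rename_i b
      by_cases hb : T.IsActive b
      · exact hact _ _ hb
      · exact absurd hab ((hinactive _ hb).2.2 _).2
    · exact absurd hab (hnot _ _)
    · exact hlt' _ _ ((hlt _ _).2 hab)

open scoped Classical in
theorem avoiders_eq_sum_shapeAvoiders (hm : 0 < m) (n : ℕ) :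
    P.avoiders n = ∑ S : {S : Finset (Fin n × Fin n) // T.Admissible S},
      (P.restrictInit m).shapeAvoiders (T.shape S.2) := by
  rw [POP.avoiders, ← T.card_not_occursUnder hm]
  exact Nat.card_congr (Equiv.subtypeEquivRight fun π =>
    not_congr (P.occurs_iff_occursUnder T hk hinactive hbelow hlt π))

end Tail

open scoped Classical in
theorem avoiders_eq_sum_of_isolated {m : ℕ} (P Q : POP k) {I : Finset ℕ}
    (hP : ∀ i, P.Isolated i ↔ i ∈ I) (hQ : ∀ i, Q.Isolated i ↔ i ∈ I) (hm : 0 < m) (hmk : m ≤ k)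
    (hbelow : ∀ x y, m < x → x ≤ k → x ∉ I → 1 ≤ y → y ≤ m → Q.lt y x)
    (hlt : ∀ a b, m < a → m < b → (P.lt a b ↔ Q.lt a b)) (n : ℕ) :
    Q.avoiders n = ∑ S : {S : Finset (Fin n × Fin n) // (P.tailPattern I m hP).Admissible S},
      (Q.restrictInit m).shapeAvoiders ((P.tailPattern I m hP).shape S.2) :=
  Q.avoiders_eq_sum_shapeAvoiders _ (by omega) (fun b hb => (hQ _).2 (not_not.1 hb))
    (fun a b hb => hbelow _ _ (by omega) (by omega) hb (by omega) (by omega))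
    (fun a b => hlt _ _ (by omega) (by omega)) hm n

end POP

/-- **Theorem 1.2.** Let `p, p'` be POPs of size `k` with the same set `I` of isolated
labels, such that (in both) every label in `{1,…,i₁−1}` is strictly below every label of
`{i₁,…,k} \\ I`, where `i₁ = min I`. If the restrictions to `{1,…,i₁−1}` are
shape-Wilf-equivalent and the restrictions to `{i₁,…,k} \\ I` coincide, then `p ∼ p'`. -/
theorem wilfEquiv_of_shapeWilfEquiv_of_isolated {k : ℕ} (p p' : POP k)
    (I : Finset ℕ) (hne : I.Nonempty)
    (hIp : ∀ i, p.Isolated i ↔ i ∈ I)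
    (hIp' : ∀ i, p'.Isolated i ↔ i ∈ I)
    (hbelow : ∀ x y, I.min' hne ≤ x → x ≤ k → x ∉ I → 1 ≤ y → y < I.min' hne →
      p.lt y x ∧ p'.lt y x)
    (hJ : ∀ a b, I.min' hne ≤ a → a ≤ k → a ∉ I → I.min' hne ≤ b → b ≤ k → b ∉ I →
      (p.lt a b ↔ p'.lt a b))
    (hI : ShapeWilfEquiv (p.restrictInit (I.min' hne - 1))
      (p'.restrictInit (I.min' hne - 1))) :
    WilfEquiv p p' := by
  have hi₁ : 1 ≤ I.min' hne ∧ I.min' hne ≤ k := ((hIp _).2 (I.min'_mem hne)).imp_right And.left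
  have hJ' : ∀ a b, I.min' hne ≤ a → I.min' hne ≤ b → (p.lt a b ↔ p'.lt a b) :=
    fun _ _ => POP.lt_iff_lt_of_isolated hIp hIp' hJ
  rcases Nat.eq_zero_or_pos (I.min' hne - 1) with hm | hm
  · obtain rfl : p = p' := POP.ext_lt fun a b => by
      by_cases hab : 1 ≤ a ∧ 1 ≤ b
      · exact hJ' a b (by omega) (by omega)
      · exact iff_of_false (fun h => hab ⟨(p.supp a b h).1, (p.supp a b h).2.2.1⟩)
          (fun h => hab ⟨(p'.supp a b h).1, (p'.supp a b h).2.2.1⟩)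
    exact fun _ _ => rfl
  intro n _
  rw [p.avoiders_eq_sum_of_isolated p hIp hIp hm (by omega)
      (fun x y hx hxk hxI hy hym => (hbelow x y (by omega) hxk hxI hy (by omega)).1)
      (fun _ _ _ _ => Iff.rfl),
    p.avoiders_eq_sum_of_isolated p' hIp hIp' hm (by omega)
      (fun x y hx hxk hxI hy hym => (hbelow x y (by omega) hxk hxI hy (by omega)).2)
      (fun a b ha hb => hJ' a b (by omega) (by omega))]
  exact sum_congr rfl fun S _ => hI _ _ (TailPattern.shape_antitone S.2) (TailPattern.shape_pos S.2)
end

section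
/- Let p, p' be POPs of size k whose sets of isolated labels are both equal to I, with k−2 ∉ I, such that in both p and p' every label in {1,…,k−2}∖I is strictly below k−1 and strictly below k. Suppose the restrictions of p and p' to {1,…,k−2}∖I coincide, that k is strictly below k−1 in p, and that k−1 is strictly below k in p'. Then p and p' are Wilf-equivalent. -/
/-!
An occurrence of `p` (resp. `p'`) is a pair of positions `i < j` carrying a descent (resp. an
ascent) such that `i` is *marked*: to its left lies an occurrence of the restriction of `p` to
`{1, …, k-2}` whose non-isolated entries are all below `min (π i) (π j)`. Whether a position is
marked at a given value depends only on the entries at unmarked positions, so rearranging the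
values at marked positions, keeping every such position marked, is an equivalence relation.
Swapping the two entries of a marked descent (resp. ascent) stays in the class and raises
(resp. lowers) `∑ j * π j`, so every class contains a permutation with no marked descent and
one with no marked ascent. Both are unique: at the first position where two members of a class
differ, one of them has a marked descent and the other a marked ascent. Hence the avoiders of
`p` and of `p'` are both in bijection with the classes.
-/

open Equiv

section MarkedSwaps

-- `B π i v`: position `i` of `π` is marked when it holds the value `v`.
variable {n : ℕ} (B : Perm (Fin n) → Fin n → Fin n → Prop)

def Rearranges (π σ : Perm (Fin n)) : Prop :=
  (∀ j, ¬ B π j (π j) → σ j = π j) ∧ ∀ j, B π j (π j) → B π j (σ j)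

def HasMarkedDescent (π : Perm (Fin n)) : Prop :=
  ∃ i j, i < j ∧ π j < π i ∧ B π i (π j)

def HasMarkedAscent (π : Perm (Fin n)) : Prop :=
  ∃ i j, i < j ∧ π i < π j ∧ B π i (π i)

variable {B} {π σ τ : Perm (Fin n)}

theorem rearranges_refl (π : Perm (Fin n)) : Rearranges B π π :=
  ⟨fun _ _ => rfl, fun _ h => h⟩

theorem Rearranges.marked_iff (hstable : ∀ π σ, Rearranges B π σ → B σ = B π)
    (h : Rearranges B π σ) (j : Fin n) : B σ j (σ j) ↔ B π j (π j) := by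
  rw [hstable π σ h]
  refine ⟨fun hσ => ?_, h.2 j⟩
  by_contra hπ
  exact hπ (h.1 j hπ ▸ hσ)

theorem Rearranges.symm (hstable : ∀ π σ, Rearranges B π σ → B σ = B π)
    (h : Rearranges B π σ) : Rearranges B σ π := by
  refine ⟨fun j hj => (h.1 j (mt (h.marked_iff hstable j).2 hj)).symm, fun j hj => ?_⟩
  rw [hstable π σ h]
  exact (h.marked_iff hstable j).1 hj

theorem Rearranges.trans (hstable : ∀ π σ, Rearranges B π σ → B σ = B π)
    (h : Rearranges B π σ) (h' : Rearranges B σ τ) : Rearranges B π τ := by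
  refine ⟨fun j hj => ?_, fun j hj => ?_⟩
  · rw [h'.1 j (mt (h.marked_iff hstable j).1 hj), h.1 j hj]
  · rw [← hstable π σ h]
    exact h'.2 j ((h.marked_iff hstable j).2 hj)

def rearrangesSetoid (hstable : ∀ π σ, Rearranges B π σ → B σ = B π) :
    Setoid (Perm (Fin n)) where
  r := Rearranges B
  iseqv := ⟨rearranges_refl, fun h => h.symm hstable, fun h h' => h.trans hstable h'⟩

theorem rearranges_swap
    (hmono : ∀ π i v i' v', B π i v → i ≤ i' → v ≤ v' → B π i' v')
    {i j : Fin n} (hij : i < j) (hB : B π i (min (π i) (π j))) :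
    Rearranges B π ((swap i j).trans π) := by
  have hi : B π i (π i) := hmono _ _ _ _ _ hB le_rfl (min_le_left _ _)
  have hj : B π j (π j) := hmono _ _ _ _ _ hB hij.le (min_le_right _ _)
  refine ⟨fun x hx => ?_, fun x _ => ?_⟩
  · rw [trans_apply, swap_apply_of_ne_of_ne (by rintro rfl; exact hx hi)
      (by rintro rfl; exact hx hj)]
  · rw [trans_apply]
    rcases eq_or_ne x i with rfl | hxi
    · rw [swap_apply_left]
      exact hmono _ _ _ _ _ hB le_rfl (min_le_right _ _)
    rcases eq_or_ne x j with rfl | hxj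
    · rw [swap_apply_right]
      exact hmono _ _ _ _ _ hB hij.le (min_le_left _ _)
    rwa [swap_apply_of_ne_of_ne hxi hxj]

def permMoment (π : Perm (Fin n)) : ℤ :=
  ∑ j : Fin n, ((j : ℕ) : ℤ) * ((π j : ℕ) : ℤ)

theorem permMoment_swap_trans (π : Perm (Fin n)) {i j : Fin n} (hij : i ≠ j) :
    permMoment ((swap i j).trans π) =
      permMoment π + (((j : ℕ) : ℤ) - (i : ℕ)) * (((π i : ℕ) : ℤ) - (π j : ℕ)) := by
  have hswap : permMoment ((swap i j).trans π) =
      ∑ x, ((swap i j x : ℕ) : ℤ) * ((π x : ℕ) : ℤ) := by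
    rw [← Equiv.sum_comp (swap i j)]
    simp [permMoment]
  have hdiff : ∑ x, (((swap i j x : ℕ) : ℤ) - (x : ℕ)) * ((π x : ℕ) : ℤ) =
      (((j : ℕ) : ℤ) - (i : ℕ)) * (((π i : ℕ) : ℤ) - (π j : ℕ)) := by
    rw [Fintype.sum_eq_add i j hij fun x hx => by
      rw [swap_apply_of_ne_of_ne hx.1 hx.2, sub_self, zero_mul]]
    simp only [swap_apply_left, swap_apply_right]
    ring
  rw [hswap, permMoment, ← hdiff, ← Finset.sum_add_distrib]
  congr 1
  ext x
  ring

theorem permMoment_lt_swap_trans {i j : Fin n} (hij : i < j) (hdesc : π j < π i) :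
    permMoment π < permMoment ((swap i j).trans π) := by
  have hpos := mul_pos (sub_pos.2 (show ((i : ℕ) : ℤ) < (j : ℕ) from mod_cast hij))
    (sub_pos.2 (show ((π j : ℕ) : ℤ) < (π i : ℕ) from mod_cast hdesc))
  linarith [permMoment_swap_trans π hij.ne]

theorem permMoment_swap_trans_lt {i j : Fin n} (hij : i < j) (hasc : π i < π j) :
    permMoment ((swap i j).trans π) < permMoment π := by
  have hneg := mul_neg_of_pos_of_neg (sub_pos.2 (show ((i : ℕ) : ℤ) < (j : ℕ) from mod_cast hij))
    (sub_neg.2 (show ((π i : ℕ) : ℤ) < (π j : ℕ) from mod_cast hasc))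
  linarith [permMoment_swap_trans π hij.ne]

theorem exists_first_ne (h : π ≠ σ) : ∃ j, π j ≠ σ j ∧ ∀ i < j, π i = σ i := by
  obtain ⟨j₀, hj₀⟩ := DFunLike.ne_iff.1 h
  obtain ⟨j, hj, hmin⟩ := wellFounded_lt.has_min {j | π j ≠ σ j} ⟨j₀, hj₀⟩
  exact ⟨j, hj, fun i hi => by_contra fun hne => hmin i hne hi⟩

theorem lt_symm_apply_of_first_ne {j : Fin n} (hj : π j ≠ σ j) (hbefore : ∀ i < j, π i = σ i) :
    j < σ.symm (π j) := by
  have hne : σ.symm (π j) ≠ j := fun h => hj (by rw [← σ.apply_symm_apply (π j), h])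
  refine lt_of_le_of_ne (not_lt.1 fun hlt => hne (π.injective ?_)) hne.symm
  rw [hbefore _ hlt, apply_symm_apply]

theorem Rearranges.eq_of_not_hasMarkedDescent (hstable : ∀ π σ, Rearranges B π σ → B σ = B π)
    (h : Rearranges B π σ) (hπ : ¬ HasMarkedDescent B π) (hσ : ¬ HasMarkedDescent B σ) :
    π = σ := by
  by_contra hne
  obtain ⟨j, hj, hbefore⟩ := exists_first_ne hne
  wlog hlt : π j < σ j generalizing π σ
  · exact this (h.symm hstable) hσ hπ (Ne.symm hne) hj.symm (fun i hi => (hbefore i hi).symm)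
      (lt_of_le_of_ne (not_lt.1 hlt) hj.symm)
  have hmarked : B π j (π j) := by_contra fun hu => hj (h.1 j hu).symm
  refine hσ ⟨j, σ.symm (π j), lt_symm_apply_of_first_ne hj hbefore, ?_, ?_⟩
  · rwa [apply_symm_apply]
  · rwa [apply_symm_apply, hstable π σ h]

theorem Rearranges.eq_of_not_hasMarkedAscent (hstable : ∀ π σ, Rearranges B π σ → B σ = B π)
    (h : Rearranges B π σ) (hπ : ¬ HasMarkedAscent B π) (hσ : ¬ HasMarkedAscent B σ) :
    π = σ := by
  by_contra hne
  obtain ⟨j, hj, hbefore⟩ := exists_first_ne hne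
  wlog hlt : π j < σ j generalizing π σ
  · exact this (h.symm hstable) hσ hπ (Ne.symm hne) hj.symm (fun i hi => (hbefore i hi).symm)
      (lt_of_le_of_ne (not_lt.1 hlt) hj.symm)
  have hmarked : B π j (π j) := by_contra fun hu => hj (h.1 j hu).symm
  refine hπ ⟨j, π.symm (σ j),
    lt_symm_apply_of_first_ne hj.symm fun i hi => (hbefore i hi).symm, ?_, hmarked⟩
  rwa [apply_symm_apply]

theorem exists_rearranges_not (hstable : ∀ π σ, Rearranges B π σ → B σ = B π)
    {Q : Perm (Fin n) → Prop} (φ : Perm (Fin n) → ℤ)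
    (hQ : ∀ σ, Q σ → ∃ τ, Rearranges B σ τ ∧ φ σ < φ τ) (π : Perm (Fin n)) :
    ∃ σ, Rearranges B π σ ∧ ¬ Q σ := by
  obtain ⟨σ, hσ, hmax⟩ :=
    Set.exists_max_image {σ | Rearranges B π σ} φ (Set.toFinite _) ⟨π, rearranges_refl π⟩
  refine ⟨σ, hσ, fun hQσ => ?_⟩
  obtain ⟨τ, hστ, hlt⟩ := hQ σ hQσ
  exact (hmax τ (hσ.trans hstable hστ)).not_gt hlt

end MarkedSwaps

theorem card_subtype_eq_card_quotient {α : Type*} (s : Setoid α) {P : α → Prop}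
    (hex : ∀ a, ∃ b, s.r a b ∧ P b) (huniq : ∀ a b, s.r a b → P a → P b → a = b) :
    Nat.card {a // P a} = Nat.card (Quotient s) := by
  refine Nat.card_eq_of_bijective (fun a => ⟦a.1⟧) ⟨fun a b hab => ?_, fun q => ?_⟩
  · exact Subtype.ext (huniq _ _ (Quotient.exact hab) a.2 b.2)
  · induction q using Quotient.ind with
    | _ a =>
      obtain ⟨b, hab, hb⟩ := hex a
      exact ⟨⟨b, hb⟩, Quotient.sound (s.symm hab)⟩

theorem card_not_hasMarkedDescent_eq_card_not_hasMarkedAscent {n : ℕ}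
    {B : Perm (Fin n) → Fin n → Fin n → Prop}
    (hmono : ∀ π i v i' v', B π i v → i ≤ i' → v ≤ v' → B π i' v')
    (hstable : ∀ π σ, Rearranges B π σ → B σ = B π) :
    Nat.card {π // ¬ HasMarkedDescent B π} = Nat.card {π // ¬ HasMarkedAscent B π} := by
  have hdesc : ∀ σ, HasMarkedDescent B σ →
      ∃ τ, Rearranges B σ τ ∧ permMoment σ < permMoment τ := by
    rintro σ ⟨i, j, hij, hlt, hB⟩
    exact ⟨_, rearranges_swap hmono hij (by rwa [min_eq_right hlt.le]),
      permMoment_lt_swap_trans hij hlt⟩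
  have hasc : ∀ σ, HasMarkedAscent B σ →
      ∃ τ, Rearranges B σ τ ∧ -permMoment σ < -permMoment τ := by
    rintro σ ⟨i, j, hij, hlt, hB⟩
    exact ⟨_, rearranges_swap hmono hij (by rwa [min_eq_left hlt.le]),
      neg_lt_neg (permMoment_swap_trans_lt hij hlt)⟩
  rw [card_subtype_eq_card_quotient (rearrangesSetoid hstable)
      (exists_rearranges_not hstable _ hdesc) fun _ _ h => h.eq_of_not_hasMarkedDescent hstable,
    card_subtype_eq_card_quotient (rearrangesSetoid hstable)
      (exists_rearranges_not hstable _ hasc) fun _ _ h => h.eq_of_not_hasMarkedAscent hstable]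

section OccLeftBelow

variable {K n : ℕ} (S : Fin K → Prop) (R : Fin K → Fin K → Prop)

structure IsOccLeftBelow (π : Perm (Fin n)) (i v : Fin n) (g : Fin K → Fin n) : Prop where
  strictMono : StrictMono g
  lt_index : ∀ a, g a < i
  rel : ∀ a b, R a b → π (g a) < π (g b)
  lt_value : ∀ a, S a → π (g a) < v

def OccLeftBelow (π : Perm (Fin n)) (i v : Fin n) : Prop :=
  ∃ g, IsOccLeftBelow S R π i v g

variable {S R} {π σ : Perm (Fin n)} {i v : Fin n} {g : Fin K → Fin n}

theorem IsOccLeftBelow.mono (hg : IsOccLeftBelow S R π i v g) {i' v' : Fin n} (hi : i ≤ i')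
    (hv : v ≤ v') : IsOccLeftBelow S R π i' v' g :=
  ⟨hg.strictMono, fun a => (hg.lt_index a).trans_le hi, hg.rel,
    fun a ha => (hg.lt_value a ha).trans_le hv⟩

theorem OccLeftBelow.mono (h : OccLeftBelow S R π i v) {i' v' : Fin n} (hi : i ≤ i')
    (hv : v ≤ v') : OccLeftBelow S R π i' v' :=
  let ⟨g, hg⟩ := h
  ⟨g, hg.mono hi hv⟩

theorem IsOccLeftBelow.of_eq (hRS : ∀ a b, R a b → S a ∧ S b) (hg : IsOccLeftBelow S R π i v g)
    (hfix : ∀ a, S a → σ (g a) = π (g a)) : IsOccLeftBelow S R σ i v g where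
  strictMono := hg.strictMono
  lt_index := hg.lt_index
  rel a b hab := by
    rw [hfix a (hRS a b hab).1, hfix b (hRS a b hab).2]
    exact hg.rel a b hab
  lt_value a ha := hfix a ha ▸ hg.lt_value a ha

theorem OccLeftBelow.exists_unmarked (h : OccLeftBelow S R π i v) :
    ∃ g, IsOccLeftBelow S R π i v g ∧ ∀ a, S a → ¬ OccLeftBelow S R π (g a) (π (g a)) := by
  induction v using WellFoundedLT.induction generalizing i with
  | _ v ih =>
    obtain ⟨g, hg⟩ := h
    by_cases hm : ∃ a, S a ∧ OccLeftBelow S R π (g a) (π (g a))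
    · obtain ⟨a, ha, hma⟩ := hm
      obtain ⟨g', hg', hg'u⟩ := ih _ (hg.lt_value a ha) hma
      exact ⟨g', hg'.mono (hg.lt_index a).le (hg.lt_value a ha).le, hg'u⟩
    · push Not at hm
      exact ⟨g, hg, hm⟩

theorem occLeftBelow_eq_of_rearranges (hRS : ∀ a b, R a b → S a ∧ S b)
    (h : Rearranges (OccLeftBelow S R) π σ) : OccLeftBelow S R σ = OccLeftBelow S R π := by
  ext i v
  constructor
  · rintro ⟨g, hg⟩
    by_cases hm : ∃ a, S a ∧ OccLeftBelow S R π (g a) (π (g a))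
    · obtain ⟨a, ha, hma⟩ := hm
      exact (h.2 _ hma).mono (hg.lt_index a).le (hg.lt_value a ha).le
    · push Not at hm
      exact ⟨g, hg.of_eq hRS fun a ha => (h.1 _ (hm a ha)).symm⟩
  · intro hπ
    obtain ⟨g, hg, hgu⟩ := hπ.exists_unmarked
    exact ⟨g, hg.of_eq hRS fun a ha => h.1 _ (hgu a ha)⟩

end OccLeftBelow

theorem Fin.strictMono_snoc {α : Type*} [Preorder α] {m : ℕ} {f : Fin m → α} {x : α}
    (hf : StrictMono f) (hx : ∀ i, f i < x) : StrictMono (Fin.snoc f x : Fin (m + 1) → α) := by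
  intro a b hab
  induction b using Fin.lastCases with
  | last =>
    obtain ⟨a, rfl⟩ := Fin.exists_castSucc_eq.2 hab.ne
    simpa using hx a
  | cast b =>
    obtain ⟨a, rfl⟩ := Fin.exists_castSucc_eq.2 (hab.trans (Fin.castSucc_lt_last b)).ne
    simpa using hf (Fin.castSucc_lt_castSucc_iff.1 hab)

namespace POP

variable {k K n : ℕ}

theorem not_isolated_left (p : POP k) {a b : ℕ} (h : p.lt a b) : ¬ p.Isolated a :=
  fun ha => (ha.2.2 b).1 h

theorem not_isolated_right (p : POP k) {a b : ℕ} (h : p.lt a b) : ¬ p.Isolated b :=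
  fun hb => (hb.2.2 a).2 h

theorem lt_iff_lt_of_isolated_eq (p p' : POP k) {I : Finset ℕ} (hIp : ∀ i, p.Isolated i ↔ i ∈ I)
    (hIp' : ∀ i, p'.Isolated i ↔ i ∈ I) {m : ℕ}
    (hres : ∀ a b, a ≤ m → b ≤ m → a ∉ I → b ∉ I → (p.lt a b ↔ p'.lt a b))
    {a b : ℕ} (ha : a ≤ m) (hb : b ≤ m) : p.lt a b ↔ p'.lt a b :=
  ⟨fun h => (hres a b ha hb ((hIp a).not.1 (p.not_isolated_left h))
      ((hIp b).not.1 (p.not_isolated_right h))).1 h,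
    fun h => (hres a b ha hb ((hIp' a).not.1 (p'.not_isolated_left h))
      ((hIp' b).not.1 (p'.not_isolated_right h))).2 h⟩

theorem le_of_lt_of_le (q : POP (K + 2))
    (hlow : ∀ x, 1 ≤ x → x ≤ K → ¬ q.Isolated x → q.lt x (K + 1) ∧ q.lt x (K + 2))
    {x y : ℕ} (h : q.lt x y) (hy : y ≤ K) : x ≤ K := by
  by_contra hx
  have hxy := q.supp _ _ h
  have hy' := hlow y hxy.2.2.1 hy (q.not_isolated_right h)
  obtain rfl | rfl : x = K + 1 ∨ x = K + 2 := by omega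
  · exact q.irrefl _ (q.trans _ _ _ h hy'.1)
  · exact q.irrefl _ (q.trans _ _ _ h hy'.2)

theorem occurs_iff (q : POP (K + 2))
    (hlow : ∀ x, 1 ≤ x → x ≤ K → ¬ q.Isolated x → q.lt x (K + 1) ∧ q.lt x (K + 2))
    (π : Perm (Fin n)) :
    q.Occurs π ↔ ∃ i j, i < j ∧ (q.lt (K + 1) (K + 2) → π i < π j) ∧
      (q.lt (K + 2) (K + 1) → π j < π i) ∧
      OccLeftBelow (fun a : Fin K => ¬ q.Isolated (a + 1))
        (fun a b => q.lt (a + 1) (b + 1)) π i (min (π i) (π j)) := by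
  constructor
  · rintro ⟨f, hf, hrel⟩
    refine ⟨f (Fin.last K).castSucc, f (Fin.last (K + 1)), hf (Fin.castSucc_lt_last _),
      fun h => hrel _ _ (by simpa using h), fun h => hrel _ _ (by simpa using h),
      fun a => f a.castSucc.castSucc, ⟨?_, ?_, ?_, ?_⟩⟩
    · exact hf.comp (Fin.strictMono_castSucc.comp Fin.strictMono_castSucc)
    · exact fun a => hf (Fin.castSucc_lt_castSucc_iff.2 (Fin.castSucc_lt_last a))
    · exact fun a b h => hrel _ _ (by simpa using h)
    · intro a ha
      have := hlow (a + 1) (by omega) a.isLt ha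
      exact lt_min (hrel _ _ (by simpa using this.1)) (hrel _ _ (by simpa using this.2))
  · rintro ⟨i, j, hij, hup, hdown, g, hg⟩
    have hlow_i : ∀ a : Fin K, ¬ q.lt (K + 1) (a + 1) := fun a h =>
      absurd (q.le_of_lt_of_le hlow h a.isLt) (by omega)
    have hlow_j : ∀ a : Fin K, ¬ q.lt (K + 2) (a + 1) := fun a h =>
      absurd (q.le_of_lt_of_le hlow h a.isLt) (by omega)
    refine ⟨Fin.snoc (Fin.snoc g i : Fin (K + 1) → Fin n) j,
      Fin.strictMono_snoc (Fin.strictMono_snoc hg.strictMono hg.lt_index)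
        (Fin.lastCases (by simpa using hij) fun a => by simpa using (hg.lt_index a).trans hij), ?_⟩
    simp only [Fin.forall_fin_succ', Fin.snoc_castSucc, Fin.snoc_last, Fin.val_castSucc,
      Fin.val_last]
    refine ⟨⟨fun a => ⟨⟨hg.rel a, fun h => ?_⟩, fun h => ?_⟩, ⟨fun a h => absurd h (hlow_i a),
      fun h => absurd h (q.irrefl _)⟩, hup⟩, ⟨fun a h => absurd h (hlow_j a), hdown⟩,
      fun h => absurd h (q.irrefl _)⟩
    · exact (hg.lt_value a (q.not_isolated_left h)).trans_le (min_le_left _ _)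
    · exact (hg.lt_value a (q.not_isolated_left h)).trans_le (min_le_right _ _)

theorem occurs_iff_hasMarkedDescent (q : POP (K + 2))
    (hlow : ∀ x, 1 ≤ x → x ≤ K → ¬ q.Isolated x → q.lt x (K + 1) ∧ q.lt x (K + 2))
    (htop : q.lt (K + 2) (K + 1)) (π : Perm (Fin n)) :
    q.Occurs π ↔ HasMarkedDescent (OccLeftBelow (fun a : Fin K => ¬ q.Isolated (a + 1))
      (fun a b => q.lt (a + 1) (b + 1))) π := by
  have hnot : ¬ q.lt (K + 1) (K + 2) := fun h => q.irrefl _ (q.trans _ _ _ h htop)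
  rw [q.occurs_iff hlow]
  refine exists₂_congr fun i j => ⟨?_, ?_⟩
  · rintro ⟨hij, -, hdesc, hB⟩
    exact ⟨hij, hdesc htop, by rwa [min_eq_right (hdesc htop).le] at hB⟩
  · rintro ⟨hij, hdesc, hB⟩
    exact ⟨hij, (absurd · hnot), fun _ => hdesc, by rwa [min_eq_right hdesc.le]⟩

theorem occurs_iff_hasMarkedAscent (q : POP (K + 2))
    (hlow : ∀ x, 1 ≤ x → x ≤ K → ¬ q.Isolated x → q.lt x (K + 1) ∧ q.lt x (K + 2))
    (htop : q.lt (K + 1) (K + 2)) (π : Perm (Fin n)) :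
    q.Occurs π ↔ HasMarkedAscent (OccLeftBelow (fun a : Fin K => ¬ q.Isolated (a + 1))
      (fun a b => q.lt (a + 1) (b + 1))) π := by
  have hnot : ¬ q.lt (K + 2) (K + 1) := fun h => q.irrefl _ (q.trans _ _ _ h htop)
  rw [q.occurs_iff hlow]
  refine exists₂_congr fun i j => ⟨?_, ?_⟩
  · rintro ⟨hij, hasc, -, hB⟩
    exact ⟨hij, hasc htop, by rwa [min_eq_left (hasc htop).le] at hB⟩
  · rintro ⟨hij, hasc, hB⟩
    exact ⟨hij, fun _ => hasc, (absurd · hnot), by rwa [min_eq_left hasc.le]⟩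

end POP

theorem wilfEquiv_from_west_general {k : ℕ} (p p' : POP k) (I : Finset ℕ)
    (hIp : ∀ i, p.Isolated i ↔ i ∈ I)
    (hIp' : ∀ i, p'.Isolated i ↔ i ∈ I)
    (hbelow : ∀ x, 1 ≤ x → x ≤ k - 2 → x ∉ I →
      p.lt x (k - 1) ∧ p.lt x k ∧ p'.lt x (k - 1) ∧ p'.lt x k)
    (hres : ∀ a b, a ≤ k - 2 → b ≤ k - 2 → a ∉ I → b ∉ I → (p.lt a b ↔ p'.lt a b))
    (hp : p.lt k (k - 1)) (hp' : p'.lt (k - 1) k) :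
    WilfEquiv p p' := by
  intro n _
  obtain ⟨K, rfl⟩ : ∃ K, k = K + 2 := ⟨k - 2, by have := p.supp _ _ hp; omega⟩
  have hlow : ∀ x, 1 ≤ x → x ≤ K → x ∉ I →
      (p.lt x (K + 1) ∧ p.lt x (K + 2)) ∧ (p'.lt x (K + 1) ∧ p'.lt x (K + 2)) :=
    fun x h₁ h₂ hx => have h := hbelow x h₁ (by omega) hx; ⟨⟨h.1, h.2.1⟩, h.2.2⟩
  have hS : (fun a : Fin K => ¬ p'.Isolated (a + 1)) = fun a : Fin K => ¬ p.Isolated (a + 1) := by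
    ext a
    rw [hIp, hIp']
  have hR : (fun a b : Fin K => p'.lt (a + 1) (b + 1)) =
      fun a b : Fin K => p.lt (a + 1) (b + 1) := by
    ext a b
    exact (p.lt_iff_lt_of_isolated_eq p' hIp hIp' hres (by omega) (by omega)).symm
  have hD := p.occurs_iff_hasMarkedDescent (n := n)
    (fun x h₁ h₂ hx => (hlow x h₁ h₂ ((hIp x).not.1 hx)).1) hp
  have hA := p'.occurs_iff_hasMarkedAscent (n := n)
    (fun x h₁ h₂ hx => (hlow x h₁ h₂ ((hIp' x).not.1 hx)).2) hp'
  rw [hS, hR] at hA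
  simp only [POP.avoiders, hD, hA]
  exact card_not_hasMarkedDescent_eq_card_not_hasMarkedAscent
    (fun _ _ _ _ _ h => h.mono) fun _ _ => occLeftBelow_eq_of_rearranges
      fun a b h => ⟨p.not_isolated_left h, p.not_isolated_right h⟩

/-- **Lemma 2.3.** Let `p, p'` be POPs of size `k` with the same set `I` of isolated
labels, `k−2 ∉ I`, in both of which every label of `{1,…,k−2} \\ I` is strictly below
`k−1` and below `k`, with coinciding restrictions to `{1,…,k−2} \\ I`, and with `k`
below `k−1` in `p` while `k−1` is below `k` in `p'`. Then `p ∼ p'`. -/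
theorem wilfEquiv_from_west {k : ℕ} (p p' : POP k) (I : Finset ℕ)
    (hIp : ∀ i, p.Isolated i ↔ i ∈ I)
    (hIp' : ∀ i, p'.Isolated i ↔ i ∈ I)
    (hk2 : k - 2 ∉ I)
    (hbelow : ∀ x, 1 ≤ x → x ≤ k - 2 → x ∉ I →
      p.lt x (k - 1) ∧ p.lt x k ∧ p'.lt x (k - 1) ∧ p'.lt x k)
    (hres : ∀ a b, a ≤ k - 2 → b ≤ k - 2 → a ∉ I → b ∉ I → (p.lt a b ↔ p'.lt a b))
    (hp : p.lt k (k - 1)) (hp' : p'.lt (k - 1) k) :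
    WilfEquiv p p' :=
  wilfEquiv_from_west_general p p' I hIp hIp' hbelow hres hp hp'
end

section
/- The POPs (1,2;4,3) and (1,2;3,4) are Wilf-equivalent. (Explicitly, (1,2;4,3) is the POP of size 4 whose only strict relations are 2 below 1 and 3 below 4; (1,2;3,4) is the POP of size 4 whose only strict relations are 2 below 1 and 4 below 3.) -/
/-- The POP `(1,2;4,3)`: only relations `2 < 1` and `3 < 4`. -/
def pop12c43 : POP 4 where
  lt a b := (a = 2 ∧ b = 1) ∨
    (a = 3 ∧ b = 4)
  supp a b h := by omega
  irrefl a h := by omega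
  trans a b c h1 h2 := by omega

/-- The POP `(1,2;3,4)`: only relations `2 < 1` and `4 < 3`. -/
def pop12c34 : POP 4 where
  lt a b := (a = 2 ∧ b = 1) ∨
    (a = 4 ∧ b = 3)
  supp a b h := by omega
  irrefl a h := by omega
  trans a b c h1 h2 := by omega

lemma POP.occurs_iff_of_size_four (p : POP 4) {n : ℕ} (π : Equiv.Perm (Fin n)) :
    p.Occurs π ↔ ∃ i j k l : Fin n, i < j ∧ j < k ∧ k < l ∧
      ∀ a b : Fin 4, p.lt (a + 1) (b + 1) → π (![i, j, k, l] a) < π (![i, j, k, l] b) := by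
  constructor
  · rintro ⟨f, hf, h⟩
    refine ⟨f 0, f 1, f 2, f 3, hf (by decide), hf (by decide), hf (by decide),
      fun a b hab => ?_⟩
    have hf' : ![f 0, f 1, f 2, f 3] = f := by ext a; fin_cases a <;> rfl
    simpa only [hf'] using h a b hab
  · rintro ⟨i, j, k, l, hij, hjk, hkl, h⟩
    refine ⟨![i, j, k, l], Fin.strictMono_iff_lt_succ.2 fun a => ?_, h⟩
    fin_cases a <;> assumption

lemma occurs_pop12c43_iff {n : ℕ} (π : Equiv.Perm (Fin n)) : pop12c43.Occurs π ↔
    ∃ i j k l : Fin n, i < j ∧ j < k ∧ k < l ∧ π j < π i ∧ π k < π l := by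
  simp [POP.occurs_iff_of_size_four, pop12c43, Fin.forall_fin_succ]

lemma occurs_pop12c34_iff {n : ℕ} (π : Equiv.Perm (Fin n)) : pop12c34.Occurs π ↔
    ∃ i j k l : Fin n, i < j ∧ j < k ∧ k < l ∧ π j < π i ∧ π l < π k := by
  simp [POP.occurs_iff_of_size_four, pop12c34, Fin.forall_fin_succ]

section

variable {α β : Type*} [LinearOrder α] [LinearOrder β] {f : α → β} {s : Set α}

lemma Function.Injective.strictMonoOn_iff_forall_not_lt (hf : f.Injective) :
    StrictMonoOn f s ↔ ∀ a ∈ s, ∀ b ∈ s, a < b → ¬ f b < f a := by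
  refine ⟨fun h a ha b hb hab => (h ha hb hab).asymm, fun h a ha b hb hab => ?_⟩
  exact lt_of_le_of_ne (not_lt.1 (h a ha b hb hab)) (hf.ne hab.ne)

lemma Function.Injective.strictAntiOn_iff_forall_not_lt (hf : f.Injective) :
    StrictAntiOn f s ↔ ∀ a ∈ s, ∀ b ∈ s, a < b → ¬ f a < f b := by
  refine ⟨fun h a ha b hb hab => (h ha hb hab).asymm, fun h a ha b hb hab => ?_⟩
  exact lt_of_le_of_ne (not_lt.1 (h a ha b hb hab)) (hf.ne hab.ne')

end

namespace Equiv.Perm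

variable {n : ℕ}

def IsInversionBottom (π : Equiv.Perm (Fin n)) (j : Fin n) : Prop :=
  ∃ i < j, π j < π i

lemma isInversionBottom_congr {π σ : Equiv.Perm (Fin n)} {j : Fin n}
    (h : ∀ i ≤ j, σ i = π i) : σ.IsInversionBottom j ↔ π.IsInversionBottom j := by
  simp only [IsInversionBottom]
  refine exists_congr fun i => and_congr_right fun hij => ?_
  rw [h i hij.le, h j le_rfl]

/-- Equal to `n` when `π = 1`, which has no inversion. -/
noncomputable def firstInversionBottom (π : Equiv.Perm (Fin n)) : ℕ := by
  classical
  exact Nat.find (p := fun m => m = n ∨ ∃ j : Fin n, (j : ℕ) = m ∧ π.IsInversionBottom j)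
    ⟨n, Or.inl rfl⟩

lemma firstInversionBottom_lt_iff (π : Equiv.Perm (Fin n)) (k : Fin n) :
    π.firstInversionBottom < k ↔ ∃ j < k, π.IsInversionBottom j := by
  classical
  rw [firstInversionBottom, Nat.find_lt_iff]
  constructor
  · rintro ⟨m, hm, rfl | ⟨j, rfl, hj⟩⟩
    · exact absurd k.isLt (by omega)
    · exact ⟨j, hm, hj⟩
  · rintro ⟨j, hj, hinv⟩
    exact ⟨j, hj, Or.inr ⟨j, rfl, hinv⟩⟩

lemma firstInversionBottom_congr {π σ : Equiv.Perm (Fin n)}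
    (h : ∀ j : Fin n, (j : ℕ) ≤ π.firstInversionBottom → σ j = π j) :
    σ.firstInversionBottom = π.firstInversionBottom := by
  classical
  have key : ∀ m ≤ π.firstInversionBottom,
      (m = n ∨ ∃ j : Fin n, (j : ℕ) = m ∧ σ.IsInversionBottom j) ↔
        (m = n ∨ ∃ j : Fin n, (j : ℕ) = m ∧ π.IsInversionBottom j) := by
    intro m hm
    refine or_congr_right <| exists_congr fun j => and_congr_right fun hj =>
      isInversionBottom_congr fun i hi => h i ?_
    have : (i : ℕ) ≤ j := hi
    omega
  conv_lhs => unfold firstInversionBottom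
  rw [Nat.find_eq_iff, key _ le_rfl]
  unfold firstInversionBottom
  exact ⟨Nat.find_spec
      (p := fun m => m = n ∨ ∃ j : Fin n, (j : ℕ) = m ∧ π.IsInversionBottom j) _,
    fun m hm => (key m hm.le).not.2 (Nat.find_min _ hm)⟩

def revAfter (t : ℕ) : Equiv.Perm (Fin n) :=
  Function.Involutive.toPerm
    (fun j => if hj : (j : ℕ) ≤ t then j else ⟨n + t - j, by omega⟩)
    (by
      intro j
      by_cases hj : (j : ℕ) ≤ t
      · simp [hj]
      · have : ¬ n + t - (j : ℕ) ≤ t := by omega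
        ext
        simp only [hj, this, dite_false]
        omega)

lemma revAfter_apply_of_le {t : ℕ} {j : Fin n} (hj : (j : ℕ) ≤ t) : revAfter t j = j :=
  dif_pos hj

lemma coe_revAfter_apply_of_lt {t : ℕ} {j : Fin n} (hj : t < (j : ℕ)) :
    (revAfter t j : ℕ) = n + t - j := by
  simp only [revAfter, Function.Involutive.toPerm, Equiv.coe_fn_mk, hj.not_ge, dite_false]

lemma revAfter_mul_self (t : ℕ) : (revAfter t : Equiv.Perm (Fin n)) * revAfter t = 1 :=
  Equiv.ext (Function.Involutive.toPerm_involutive _)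

lemma mapsTo_revAfter (t : ℕ) : Set.MapsTo (revAfter t) {j : Fin n | t < j} {j | t < j} := by
  intro j (hj : t < (j : ℕ))
  show t < (revAfter t j : ℕ)
  rw [coe_revAfter_apply_of_lt hj]
  omega

lemma strictAntiOn_revAfter (t : ℕ) : StrictAntiOn (revAfter t) {j : Fin n | t < j} := by
  intro i (hi : t < (i : ℕ)) j (hj : t < (j : ℕ)) hij
  rw [← Fin.val_fin_lt, coe_revAfter_apply_of_lt hi, coe_revAfter_apply_of_lt hj]
  have : (i : ℕ) < j := hij
  omega

lemma strictAntiOn_iff_strictMonoOn_comp_revAfter {β : Type*} [Preorder β] {f : Fin n → β}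
    (t : ℕ) : StrictAntiOn f {j | t < j} ↔ StrictMonoOn (f ∘ revAfter t) {j | t < j} := by
  refine ⟨fun hf => hf.comp (strictAntiOn_revAfter t) (mapsTo_revAfter t), fun hf => ?_⟩
  have hff : f = (f ∘ revAfter t) ∘ revAfter t := by
    rw [Function.comp_assoc, ← Equiv.Perm.coe_mul, revAfter_mul_self, Equiv.Perm.coe_one,
      Function.comp_id]
  rw [hff]
  exact hf.comp_strictAntiOn (strictAntiOn_revAfter t) (mapsTo_revAfter t)

noncomputable def revAfterFirstInversion (π : Equiv.Perm (Fin n)) : Equiv.Perm (Fin n) :=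
  π * revAfter π.firstInversionBottom

lemma firstInversionBottom_revAfterFirstInversion (π : Equiv.Perm (Fin n)) :
    π.revAfterFirstInversion.firstInversionBottom = π.firstInversionBottom :=
  firstInversionBottom_congr fun _ hj => congrArg π (revAfter_apply_of_le hj)

lemma revAfterFirstInversion_involutive :
    Function.Involutive (revAfterFirstInversion (n := n)) := by
  intro π
  rw [revAfterFirstInversion, firstInversionBottom_revAfterFirstInversion,
    revAfterFirstInversion, mul_assoc, revAfter_mul_self, mul_one]

lemma exists_inversion_lt_and_iff (π : Equiv.Perm (Fin n)) (P : Fin n → Fin n → Prop) :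
    (∃ i j k l : Fin n, i < j ∧ j < k ∧ k < l ∧ π j < π i ∧ P k l) ↔
      ∃ k l : Fin n, π.firstInversionBottom < k ∧ k < l ∧ P k l := by
  simp only [firstInversionBottom_lt_iff, IsInversionBottom]
  constructor
  · rintro ⟨i, j, k, l, hij, hjk, hkl, hji, hP⟩
    exact ⟨k, l, ⟨j, hjk, i, hij, hji⟩, hkl, hP⟩
  · rintro ⟨k, l, ⟨j, hjk, i, hij, hji⟩, hkl, hP⟩
    exact ⟨i, j, k, l, hij, hjk, hkl, hji, hP⟩

lemma not_occurs_pop12c43_iff (π : Equiv.Perm (Fin n)) :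
    ¬ pop12c43.Occurs π ↔ StrictAntiOn π {k | π.firstInversionBottom < k} := by
  rw [occurs_pop12c43_iff, exists_inversion_lt_and_iff,
    π.injective.strictAntiOn_iff_forall_not_lt]
  simp only [Set.mem_ofPred_eq, not_exists, not_and]
  exact ⟨fun h k hk l _ hkl => h k l hk hkl, fun h k l hk hkl => h k hk l (hk.trans hkl) hkl⟩

lemma not_occurs_pop12c34_iff (π : Equiv.Perm (Fin n)) :
    ¬ pop12c34.Occurs π ↔ StrictMonoOn π {k | π.firstInversionBottom < k} := by
  rw [occurs_pop12c34_iff, exists_inversion_lt_and_iff,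
    π.injective.strictMonoOn_iff_forall_not_lt]
  simp only [Set.mem_ofPred_eq, not_exists, not_and]
  exact ⟨fun h k hk l _ hkl => h k l hk hkl, fun h k l hk hkl => h k hk l (hk.trans hkl) hkl⟩

lemma not_occurs_pop12c43_iff_not_occurs_pop12c34_revAfterFirstInversion
    (π : Equiv.Perm (Fin n)) :
    ¬ pop12c43.Occurs π ↔ ¬ pop12c34.Occurs π.revAfterFirstInversion := by
  rw [not_occurs_pop12c43_iff, not_occurs_pop12c34_iff,
    firstInversionBottom_revAfterFirstInversion, revAfterFirstInversion, Equiv.Perm.coe_mul]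
  exact strictAntiOn_iff_strictMonoOn_comp_revAfter _

end Equiv.Perm

/-- The POPs `(1,2;4,3)` and `(1,2;3,4)` are Wilf-equivalent. -/
theorem stmt15 : WilfEquiv pop12c43 pop12c34 := fun _ _ =>
  Nat.card_congr <| Equiv.Perm.revAfterFirstInversion_involutive.toPerm _ |>.subtypeEquiv
    Equiv.Perm.not_occurs_pop12c43_iff_not_occurs_pop12c34_revAfterFirstInversion
end
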